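/- arXiv:2106.04962 — 7 statements merged into one kernel-verified Lean document; each statement's English description precedes it below -/
import Mathlib

section
/- Let 0 ≤ α < 1. If f ∈ 𝒜 satisfies f(z) ≠ 0 for z ∈ 𝔻\{0}, f'(z) ≠ 0 for z ∈ 𝔻, and f(z)f''(z)/f'(z)² ≺ 2(1−α)((1−2α)z² + 2z)/(1 + (1−2α)z)², then f is starlike of order α, i.e. Re(zf'(z)/f(z)) > α for all z ∈ 𝔻 (interpreting the quotient as 1 at z = 0). -/
/-!
Write `p z = z f'(z) / f(z)` and `β = 1 - 2α`. If `Re p ≤ α` somewhere, take such a point `z₀` of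
smallest modulus: then `Re p ≥ α` on `‖z‖ ≤ ‖z₀‖` with equality at `z₀`, so `ω = (p - 1) / (p + β)`
maps that disc into the closed unit disc, vanishes at `0` and has `‖ω z₀‖ = 1`. Jack's lemma gives
`z₀ ω'(z₀) = k ω(z₀)` with `k ≥ 1`. As `f f'' / f'² = (z p' / p + p - 1) / p`, with `U = ω z₀`
this says `f f'' / f'² (z₀) = 2(1 - α) U (1 + βU + k) / (1 + βU)²`, whereas the subordination makes
it `2(1 - α) w (βw + 2) / (1 + βw)²` with `‖w‖ < 1`. Multiplying by `β`, the two values can only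
agree if `(1 - (k - 1) βU) (1 + βw)² = (1 + βU)²`, which `‖βw‖ < ‖βU‖ ≤ 1` rules out.
-/

open Complex Metric Set

noncomputable section

/-- The open unit disk in `ℂ`. -/
def 𝔻 : Set ℂ := Metric.ball 0 1

/-- The class `𝒜` of analytic functions on `𝔻` normalized by `f 0 = 0`, `f' 0 = 1`. -/
def IsClassA (f : ℂ → ℂ) : Prop :=
  DifferentiableOn ℂ f 𝔻 ∧ f 0 = 0 ∧ deriv f 0 = 1

/-- `g` is subordinate to `F` on the unit disk. -/
def Subordinate (g F : ℂ → ℂ) : Prop :=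
  ∃ ω : ℂ → ℂ, DifferentiableOn ℂ ω 𝔻 ∧ ω 0 = 0 ∧ (∀ z ∈ 𝔻, ω z ∈ 𝔻) ∧
    ∀ z ∈ 𝔻, g z = F (ω z)

/-- `ψ` is a Ma-Minda function: analytic and univalent on `𝔻`, `Re ψ > 0`, `ψ 0 = 1`,
`ψ' 0 > 0`, with real Taylor coefficients (expressed via `ψ (conj z) = conj (ψ z)`). -/
def MaMinda (ψ : ℂ → ℂ) : Prop :=
  DifferentiableOn ℂ ψ 𝔻 ∧ Set.InjOn ψ 𝔻 ∧ (∀ z ∈ 𝔻, 0 < (ψ z).re) ∧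
    ψ 0 = 1 ∧ 0 < (deriv ψ 0).re ∧ (deriv ψ 0).im = 0 ∧
    (∀ z ∈ 𝔻, ψ (starRingEnd ℂ z) = starRingEnd ℂ (ψ z))

/-- The Ma-Minda starlike class `S*(ψ)`. -/
def StarlikeMM (ψ f : ℂ → ℂ) : Prop :=
  IsClassA f ∧ (∀ z ∈ 𝔻, z ≠ 0 → f z ≠ 0) ∧
    Subordinate (fun z => if z = 0 then 1 else z * deriv f z / f z) ψ

/-- The Ma-Minda convex class `C(ψ)`. -/
def ConvexMM (ψ f : ℂ → ℂ) : Prop :=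
  IsClassA f ∧ (∀ z ∈ 𝔻, deriv f z ≠ 0) ∧
    Subordinate (fun z => 1 + z * deriv (deriv f) z / deriv f z) ψ

/-- `f` is starlike of order `α`. -/
def StarlikeOrder (α : ℝ) (f : ℂ → ℂ) : Prop :=
  IsClassA f ∧ (∀ z ∈ 𝔻, z ≠ 0 → f z ≠ 0) ∧
    ∀ z ∈ 𝔻, z ≠ 0 → α < (z * deriv f z / f z).re

/-- `f` is a (normalized) convex function on `𝔻`. -/
def IsConvexFn (f : ℂ → ℂ) : Prop :=
  IsClassA f ∧ (∀ z ∈ 𝔻, deriv f z ≠ 0) ∧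
    ∀ z ∈ 𝔻, 0 < (1 + z * deriv (deriv f) z / deriv f z).re

open Filter Topology

theorem im_eq_zero_of_hasDerivAt_of_norm_le_one_on_circle {F : ℂ → ℂ} {F' : ℂ}
    (hF : HasDerivAt F F' 1) (hF1 : F 1 = 1) (hcircle : ∀ θ : ℝ, ‖F (cexp (θ * I))‖ ≤ 1) :
    F'.im = 0 := by
  have hexp : HasDerivAt (fun z : ℂ => cexp (z * I)) I 0 := by
    simpa using ((hasDerivAt_id (0 : ℂ)).mul_const I).cexp
  have hcurve : HasDerivAt (fun z : ℂ => F (cexp (z * I))) (F' * I) 0 := by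
    have hF0 : HasDerivAt F F' (cexp (0 * I)) := by simpa using hF
    exact hF0.comp (0 : ℂ) hexp
  have hmax : IsLocalMax (fun θ : ℝ => (F (cexp (θ * I))).re) 0 :=
    Eventually.of_forall fun θ => by
      simpa [hF1] using (re_le_norm _).trans (hcircle θ)
  simpa using hmax.hasDerivAt_eq_zero (hcurve.real_of_complex (z := 0))

theorem one_le_re_of_hasDerivAt_of_norm_le_on_segment {F : ℂ → ℂ} {F' : ℂ}
    (hF : HasDerivAt F F' 1) (hF1 : F 1 = 1) (hseg : ∀ t ∈ Icc (0 : ℝ) 1, ‖F t‖ ≤ t) :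
    1 ≤ F'.re := by
  have hF1' : HasDerivAt F F' ((1 : ℝ) : ℂ) := by simpa using hF
  have hderiv : HasDerivAt (fun t : ℝ => (F t).re - t) (F'.re - 1) 1 :=
    hF1'.real_of_complex.sub (hasDerivAt_id 1)
  have hmax : IsMaxOn (fun t : ℝ => (F t).re - t) (Icc 0 1) 1 := fun t ht => by
    simpa [hF1] using (re_le_norm _).trans (hseg t ht)
  have hdir : (0 : ℝ) - 1 ∈ posTangentConeAt (Icc (0 : ℝ) 1) 1 :=
    sub_mem_posTangentConeAt_of_segment_subset (by rw [segment_symm, segment_eq_Icc zero_le_one])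
  have := hmax.localize.hasFDerivWithinAt_nonpos hderiv.hasDerivWithinAt.hasFDerivWithinAt hdir
  simp only [zero_sub, ContinuousLinearMap.toSpanSingleton_apply, smul_eq_mul, neg_mul, one_mul,
    neg_sub, tsub_le_iff_right, zero_add] at this
  linarith

theorem norm_mul_le_of_isMaxOn_norm {φ : ℂ → ℂ} {z₀ : ℂ}
    (hd : DifferentiableOn ℂ φ (ball 0 ‖z₀‖)) (h0 : φ 0 = 0)
    (hmax : IsMaxOn (‖φ ·‖) (closedBall 0 ‖z₀‖) z₀) {ζ : ℂ} (hζ : ‖ζ‖ ≤ ‖z₀‖) :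
    ‖φ ζ‖ * ‖z₀‖ ≤ ‖φ z₀‖ * ‖ζ‖ := by
  rcases hζ.lt_or_eq with hlt | heq
  · have hmaps : MapsTo φ (ball 0 ‖z₀‖) (closedBall (φ 0) ‖φ z₀‖) := fun v hv => by
      simpa [h0] using hmax (ball_subset_closedBall hv)
    have hschwarz := dist_le_div_mul_dist_of_mapsTo_ball hd hmaps (mem_ball_zero_iff.2 hlt)
    have hr : 0 < ‖z₀‖ := (norm_nonneg ζ).trans_lt hlt
    rwa [h0, dist_zero_right, dist_zero_right, div_mul_eq_mul_div, le_div_iff₀ hr] at hschwarz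
  · rw [heq]
    exact mul_le_mul_of_nonneg_right (hmax (mem_closedBall_zero_iff.2 heq.le)) (norm_nonneg _)

theorem exists_one_le_mul_deriv_eq_of_isMaxOn_norm {φ : ℂ → ℂ} {z₀ D : ℂ}
    (hd : DifferentiableOn ℂ φ (ball 0 ‖z₀‖))
    (hD : HasDerivAt φ D z₀) (h0 : φ 0 = 0) (hmax : IsMaxOn (‖φ ·‖) (closedBall 0 ‖z₀‖) z₀)
    (hne : φ z₀ ≠ 0) : ∃ k : ℝ, 1 ≤ k ∧ z₀ * D = k * φ z₀ := by
  have hz₀ : 0 < ‖z₀‖ := norm_pos_iff.2 fun h => hne (h ▸ h0)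
  set F : ℂ → ℂ := fun ζ => φ (z₀ * ζ) / φ z₀
  have hF : HasDerivAt F (z₀ * D / φ z₀) 1 := by
    have hD' : HasDerivAt φ D (z₀ * 1) := by rwa [mul_one]
    simpa [F, mul_comm D] using (hD'.comp (1 : ℂ) ((hasDerivAt_id 1).const_mul z₀)).div_const (φ z₀)
  have hF1 : F 1 = 1 := by simp [F, hne]
  have hFle : ∀ ζ : ℂ, ‖ζ‖ ≤ 1 → ‖F ζ‖ ≤ ‖ζ‖ := fun ζ hζ => by
    have h := norm_mul_le_of_isMaxOn_norm hd h0 hmax (ζ := z₀ * ζ)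
      (by simpa [norm_mul] using mul_le_mul_of_nonneg_left hζ hz₀.le)
    rw [norm_mul, mul_comm ‖φ _‖, mul_left_comm ‖φ z₀‖, mul_le_mul_iff_right₀ hz₀] at h
    simpa [F, norm_div, div_le_iff₀ (norm_pos_iff.2 hne), mul_comm] using h
  have him := im_eq_zero_of_hasDerivAt_of_norm_le_one_on_circle hF hF1 fun θ => by
    simpa using hFle _ (norm_exp_ofReal_mul_I θ).le
  have hre := one_le_re_of_hasDerivAt_of_norm_le_on_segment hF hF1 fun t ht => by
    simpa [abs_of_nonneg ht.1] using hFle t (by simpa [abs_of_nonneg ht.1] using ht.2)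
  refine ⟨_, hre, ?_⟩
  rw [← div_eq_iff hne]
  exact Complex.ext rfl (by simpa using him)

theorem normSq_sub_one_sub_normSq_add (q : ℂ) (α : ℝ) :
    normSq (q - 1) - normSq (q + (1 - 2 * α)) = 4 * (1 - α) * (α - q.re) := by
  simp only [normSq_apply, sub_re, one_re, sub_im, one_im, sub_zero, add_re, mul_re, re_ofNat,
    ofReal_re, im_ofNat, ofReal_im, mul_zero, add_im, mul_im, zero_mul, add_zero]
  ring

theorem add_one_sub_two_mul_ne_zero {q : ℂ} {α : ℝ} (hα : α < 1) (hq : α ≤ q.re) :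
    q + (1 - 2 * α) ≠ 0 := fun h => by
  have := congrArg re h
  simp only [add_re, sub_re, one_re, mul_re, re_ofNat, ofReal_re, im_ofNat, ofReal_im, mul_zero,
    sub_zero, zero_re] at this
  linarith

theorem norm_sub_one_div_add_le_one {q : ℂ} {α : ℝ} (hα : α < 1) (hq : α ≤ q.re) :
    ‖(q - 1) / (q + (1 - 2 * α))‖ ≤ 1 := by
  rw [norm_div, div_le_one (norm_pos_iff.2 (add_one_sub_two_mul_ne_zero hα hq)), norm_def,
    norm_def]
  refine Real.sqrt_le_sqrt ?_
  nlinarith [normSq_sub_one_sub_normSq_add q α]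

theorem norm_sub_one_div_add_eq_one {q : ℂ} {α : ℝ} (hα : α < 1) (hq : q.re = α) :
    ‖(q - 1) / (q + (1 - 2 * α))‖ = 1 := by
  have := normSq_sub_one_sub_normSq_add q α
  rw [hq, sub_self, mul_zero, sub_eq_zero] at this
  rw [norm_div, div_eq_one_iff_eq (norm_ne_zero_iff.2 (add_one_sub_two_mul_ne_zero hα hq.ge)),
    norm_def, norm_def, this]

theorem exists_one_le_mul_deriv_eq_of_re_ge {p : ℂ → ℂ} {z₀ D : ℂ} {α : ℝ} (hα : α < 1)
    (hd : DifferentiableOn ℂ p (ball 0 ‖z₀‖)) (hD : HasDerivAt p D z₀) (hp0 : p 0 = 1)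
    (hge : ∀ v ∈ closedBall 0 ‖z₀‖, α ≤ (p v).re) (hz₀ : (p z₀).re = α) :
    ∃ k : ℝ, 1 ≤ k ∧
      2 * (1 - α) * (z₀ * D) = k * (p z₀ - 1) * (p z₀ + (1 - 2 * α)) := by
  have hne : ∀ v ∈ closedBall 0 ‖z₀‖, p v + (1 - 2 * α) ≠ 0 := fun v hv =>
    add_one_sub_two_mul_ne_zero hα (hge v hv)
  have hz₀mem : z₀ ∈ closedBall 0 ‖z₀‖ := mem_closedBall_zero_iff.2 le_rfl
  set ω : ℂ → ℂ := fun v => (p v - 1) / (p v + (1 - 2 * α))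
  have hωd : DifferentiableOn ℂ ω (ball 0 ‖z₀‖) :=
    (hd.sub_const 1).div (hd.add_const _) fun v hv => hne v (ball_subset_closedBall hv)
  have hωD : HasDerivAt ω (2 * (1 - α) * D / (p z₀ + (1 - 2 * α)) ^ 2) z₀ :=
    ((hD.sub_const 1).div (hD.add_const _) (hne z₀ hz₀mem)).congr_deriv (by ring)
  have hω0 : ω 0 = 0 := by simp [ω, hp0]
  have hωz₀ : ‖ω z₀‖ = 1 := norm_sub_one_div_add_eq_one hα hz₀
  have hωmax : IsMaxOn (‖ω ·‖) (closedBall 0 ‖z₀‖) z₀ := isMaxOn_iff.2 fun v hv =>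
    hωz₀ ▸ norm_sub_one_div_add_le_one hα (hge v hv)
  obtain ⟨k, hk, hjack⟩ := exists_one_le_mul_deriv_eq_of_isMaxOn_norm hωd hωD hω0 hωmax
    (norm_ne_zero_iff.1 (hωz₀ ▸ one_ne_zero))
  refine ⟨k, hk, ?_⟩
  have hz₀ne := hne z₀ hz₀mem
  simp only [ω] at hjack
  field_simp at hjack
  linear_combination hjack

theorem exists_norm_le_forall_closedBall_le_eq {E : Type*} [NormedAddCommGroup E]
    [NormedSpace ℝ E] [ProperSpace E] {u : E → ℝ} {α : ℝ} {z : E}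
    (hu : ContinuousOn u (closedBall 0 ‖z‖)) (h0 : α < u 0) (hz : u z ≤ α) :
    ∃ z₀, ‖z₀‖ ≤ ‖z‖ ∧ (∀ v ∈ closedBall 0 ‖z₀‖, α ≤ u v) ∧ u z₀ = α := by
  set S := closedBall (0 : E) ‖z‖ ∩ u ⁻¹' Iic α
  have hS : IsCompact S := (isCompact_closedBall 0 ‖z‖).of_isClosed_subset
    (hu.preimage_isClosed_of_isClosed isClosed_closedBall isClosed_Iic) inter_subset_left
  obtain ⟨z₀, ⟨hz₀z, hz₀α⟩, hz₀min⟩ :=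
    hS.exists_isMinOn ⟨z, mem_closedBall_zero_iff.2 le_rfl, hz⟩ continuous_norm.continuousOn
  have hz₀z : ‖z₀‖ ≤ ‖z‖ := mem_closedBall_zero_iff.1 hz₀z
  have hz₀ : ‖z₀‖ ≠ 0 := norm_ne_zero_iff.2 fun h => (h ▸ h0).not_ge hz₀α
  have hball : ball 0 ‖z₀‖ ⊆ closedBall 0 ‖z‖ ∩ u ⁻¹' Ici α := fun v hv => by
    have hv : ‖v‖ < ‖z₀‖ := mem_ball_zero_iff.1 hv
    have hvz : v ∈ closedBall 0 ‖z‖ := mem_closedBall_zero_iff.2 (hv.le.trans hz₀z)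
    exact ⟨hvz, show α ≤ u v from le_of_not_ge fun hvα => hv.not_ge (hz₀min ⟨hvz, hvα⟩)⟩
  have hclosed := closure_minimal hball <|
    hu.preimage_isClosed_of_isClosed isClosed_closedBall isClosed_Ici
  rw [closure_ball 0 hz₀] at hclosed
  have hge : ∀ v ∈ closedBall 0 ‖z₀‖, α ≤ u v := fun v hv => (hclosed hv).2
  exact ⟨z₀, hz₀z, hge, le_antisymm hz₀α (hge z₀ (mem_closedBall_zero_iff.2 le_rfl))⟩

theorem norm_mul_norm_add_one_le {s : ℂ} {κ : ℝ} (h : ‖s ^ 2 - 1‖ ≤ κ) :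
    ‖s‖ * ‖s + 1‖ ≤ ‖s + 1 + κ‖ := by
  -- In `a` and `b` the squared inequality is polynomial, given `a b ≤ κ` and `|a - b| ≤ 2`.
  set a := ‖s + 1‖
  set b := ‖s - 1‖
  have ha : 0 ≤ a := norm_nonneg _
  have hb : 0 ≤ b := norm_nonneg _
  have hab : a * b ≤ κ := by
    rwa [← norm_mul, show (s + 1) * (s - 1) = s ^ 2 - 1 by ring]
  have habs : |a - b| ≤ 2 := by
    simpa [show (s + 1) - (s - 1) = 2 by ring] using abs_norm_sub_norm_le (s + 1) (s - 1)
  have h1 := (abs_le.1 habs).2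
  have h2 := (abs_le.1 habs).1
  have ha2 : a ^ 2 = (s.re + 1) ^ 2 + s.im ^ 2 := by
    rw [Complex.sq_norm, normSq_apply]
    simp only [add_re, one_re, add_im, one_im, add_zero]
    ring
  have hb2 : b ^ 2 = (s.re - 1) ^ 2 + s.im ^ 2 := by
    rw [Complex.sq_norm, normSq_apply]
    simp only [sub_re, one_re, sub_im, one_im, sub_zero]
    ring
  have hcoef : 0 ≤ 4 + 4 * a * b + a ^ 2 - b ^ 2 := by
    nlinarith [mul_nonneg (by linarith : (0:ℝ) ≤ 2 - (a - b)) (by linarith : (0:ℝ) ≤ 2 + (a - b)),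
      mul_nonneg (add_nonneg ha hb) ha]
  have h4 : 0 ≤ 4 - (a - b) ^ 2 := by nlinarith
  refine (sq_le_sq₀ (by positivity) (norm_nonneg _)).1 ?_
  rw [mul_pow, ha2, Complex.sq_norm, Complex.sq_norm, normSq_apply, normSq_apply]
  simp only [add_re, add_im, one_re, one_im, ofReal_re, ofReal_im, add_zero]
  nlinarith [mul_nonneg (mul_nonneg ha (add_nonneg ha hb)) h4,
    mul_nonneg (sub_nonneg.2 hab) hcoef, sq_nonneg (κ - a * b), ha2, hb2]

theorem one_add_sq_ne_one_add_sq_of_norm_lt {x b : ℂ} (hb : ‖b‖ < ‖x‖) (hx : ‖x‖ ≤ 1) :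
    (1 + b) ^ 2 ≠ (1 + x) ^ 2 := by
  intro h
  rcases mul_eq_zero.1 (show (b - x) * (b + x + 2) = 0 by linear_combination h) with h | h
  · rw [sub_eq_zero.1 h] at hb
    exact hb.false
  · have hnorm : 2 - ‖x‖ ≤ ‖2 + x‖ := by simpa using norm_sub_norm_le (2 : ℂ) (-x)
    rw [show b = -(2 + x) by linear_combination h, norm_neg] at hb
    linarith

theorem one_sub_mul_mul_sq_ne_sq_of_pos {x b : ℂ} {κ : ℝ} (hκ : 0 < κ) (hb : ‖b‖ < ‖x‖)
    (hx : ‖x‖ ≤ 1) : (1 - κ * x) * (1 + b) ^ 2 ≠ (1 + x) ^ 2 := by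
  intro h
  have hb1 : 1 + b ≠ 0 := fun h1 => by
    rw [show b = -1 by linear_combination h1, norm_neg, norm_one] at hb
    linarith
  set s := (1 + x) / (1 + b)
  have hsb : s * (1 + b) = 1 + x := div_mul_cancel₀ _ hb1
  have hs2 : s ^ 2 = 1 - κ * x := by
    rw [div_pow, div_eq_iff (pow_ne_zero 2 hb1)]
    exact h.symm
  clear_value s
  have hs0 : s ≠ 0 := fun hs => by
    have : ((κ + 1 : ℝ) : ℂ) = 0 := by
      push_cast
      linear_combination -κ * hsb - hs2 + (κ * (1 + b) + s) * hs
    linarith [ofReal_eq_zero.1 this]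
  have hs1 : s ≠ 1 := fun hs => by
    have hx0 : x = 0 := by
      have : (κ : ℂ) * x = 0 := by linear_combination hs2 - (s + 1) * hs
      exact (mul_eq_zero.1 this).resolve_left (ofReal_ne_zero.2 hκ.ne')
    rw [hx0, norm_zero] at hb
    exact (norm_nonneg b).not_gt hb
  have hnorm : ‖s ^ 2 - 1‖ ≤ κ := by
    rw [hs2, show 1 - κ * x - 1 = -(κ * x) by ring, norm_neg, norm_mul, norm_real,
      Real.norm_of_nonneg hκ.le]
    exact mul_le_of_le_one_right hκ.le hx
  have hlt : ‖1 + x - s‖ < ‖x‖ * ‖s‖ := by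
    rw [show 1 + x - s = b * s by linear_combination -hsb, norm_mul]
    exact mul_lt_mul_of_pos_right hb (norm_pos_iff.2 hs0)
  have e1 : κ * ‖1 + x - s‖ = ‖1 - s‖ * ‖s + 1 + κ‖ := by
    simpa [norm_mul, abs_of_pos hκ] using congrArg norm
      (show (κ : ℂ) * (1 + x - s) = (1 - s) * (s + 1 + κ) by linear_combination hs2)
  have e2 : κ * (‖x‖ * ‖s‖) = ‖1 - s‖ * (‖s‖ * ‖s + 1‖) := by
    simpa [norm_mul, abs_of_pos hκ, mul_assoc] using congrArg norm
      (show (κ : ℂ) * (x * s) = (1 - s) * (s * (s + 1)) by linear_combination s * hs2)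
  have hpos : 0 < ‖1 - s‖ := norm_pos_iff.2 (sub_ne_zero.2 (Ne.symm hs1))
  -- `e1` and `e2` turn `hlt` into `‖s + 1 + κ‖ < ‖s‖ ‖s + 1‖`.
  have := mul_lt_mul_of_pos_left hlt hκ
  rw [e1, e2] at this
  nlinarith [norm_mul_norm_add_one_le hnorm]

theorem one_sub_mul_mul_sq_ne_sq {x b : ℂ} {κ : ℝ} (hκ : 0 ≤ κ) (hb : ‖b‖ < ‖x‖)
    (hx : ‖x‖ ≤ 1) : (1 - κ * x) * (1 + b) ^ 2 ≠ (1 + x) ^ 2 := by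
  rcases hκ.eq_or_lt with rfl | hκ
  · simpa using one_add_sq_ne_one_add_sq_of_norm_lt hb hx
  · exact one_sub_mul_mul_sq_ne_sq_of_pos hκ hb hx

theorem mul_sq_ne_mul_sq_of_norm_eq_one {β k : ℝ} {u w : ℂ} (hβ : |β| ≤ 1) (hu : ‖u‖ = 1)
    (hw : ‖w‖ < 1) (hk : 1 ≤ k) :
    u * (1 + β * u + k) * (1 + β * w) ^ 2 ≠ w * (β * w + 2) * (1 + β * u) ^ 2 := by
  intro h
  rcases eq_or_ne β 0 with rfl | hβ0
  · have := congrArg norm h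
    simp only [ofReal_zero, zero_mul, add_zero, zero_add, one_pow, mul_one, norm_mul, hu,
      one_mul, norm_ofNat] at this
    have hk' : ‖(1 : ℂ) + k‖ = 1 + k := by
      rw [← ofReal_one, ← ofReal_add, norm_real, Real.norm_of_nonneg (by linarith)]
    linarith
  · refine one_sub_mul_mul_sq_ne_sq (x := β * u) (b := β * w) (κ := k - 1) (by linarith) ?_ ?_ ?_
    · rw [norm_mul, norm_mul, hu, mul_one]
      exact mul_lt_of_lt_one_right (norm_pos_iff.2 (ofReal_ne_zero.2 hβ0)) hw
    · rwa [norm_mul, hu, mul_one, norm_real]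
    · -- `β w (β w + 2) = (1 + β w)² - 1`
      push_cast
      linear_combination (-β : ℂ) * h

theorem ne_dominant_of_re_eq {α k : ℝ} {P Q w : ℂ} (hα0 : 0 ≤ α) (hα1 : α < 1) (hk : 1 ≤ k)
    (hP : P.re = α) (hw : ‖w‖ < 1)
    (hjack : 2 * (1 - α) * (P - P ^ 2 + P ^ 2 * Q) = k * (P - 1) * (P + (1 - 2 * α))) :
    Q ≠ 2 * (1 - (α : ℂ)) * ((1 - 2 * (α : ℂ)) * w ^ 2 + 2 * w) /
      (1 + (1 - 2 * (α : ℂ)) * w) ^ 2 := by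
  intro hQ
  have hβ : |1 - 2 * α| ≤ 1 := abs_le.2 ⟨by linarith, by linarith⟩
  have hPβ := add_one_sub_two_mul_ne_zero hα1 hP.ge
  have hβw : 1 + (1 - 2 * (α : ℂ)) * w ≠ 0 := fun h => by
    have : ‖(1 - 2 * α : ℝ) * w‖ < 1 := by
      rw [norm_mul, norm_real, Real.norm_eq_abs]
      nlinarith [norm_nonneg w, abs_nonneg (1 - 2 * α)]
    rw [show ((1 - 2 * α : ℝ) : ℂ) * w = -1 by push_cast; linear_combination h] at this
    simp at this
  refine mul_sq_ne_mul_sq_of_norm_eq_one hβ (norm_sub_one_div_add_eq_one hα1 hP) hw hk ?_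
  rw [eq_div_iff (pow_ne_zero 2 hβw)] at hQ
  push_cast
  field_simp
  linear_combination -(1 + (1 - 2 * (α : ℂ)) * w) ^ 2 * hjack + 2 * (1 - (α : ℂ)) * P ^ 2 * hQ

def starlikeQuotient (f : ℂ → ℂ) (z : ℂ) : ℂ :=
  if z = 0 then 1 else z * deriv f z / f z

theorem starlikeQuotient_eq_deriv_div_dslope {f : ℂ → ℂ} (hf0 : f 0 = 0) (hf'0 : deriv f 0 = 1) :
    starlikeQuotient f = fun z => deriv f z / dslope f 0 z := by
  funext z
  by_cases hz : z = 0
  · simp [starlikeQuotient, hz, hf'0]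
  · simp [starlikeQuotient, hz, dslope_of_ne f hz, slope_def_field, hf0, div_div_eq_mul_div,
      mul_comm]

theorem differentiableOn_starlikeQuotient {f : ℂ → ℂ} (hf : IsClassA f)
    (hne : ∀ z ∈ 𝔻, z ≠ 0 → f z ≠ 0) : DifferentiableOn ℂ (starlikeQuotient f) 𝔻 := by
  obtain ⟨hfd, hf0, hf'0⟩ := hf
  have h𝔻 : IsOpen 𝔻 := isOpen_ball
  rw [starlikeQuotient_eq_deriv_div_dslope hf0 hf'0]
  refine (hfd.analyticOnNhd h𝔻).deriv.differentiableOn.div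
    ((differentiableOn_dslope (h𝔻.mem_nhds (mem_ball_self one_pos))).2 hfd) fun z hz => ?_
  by_cases h : z = 0
  · simp [h, hf'0]
  · simpa [dslope_of_ne f h, slope_def_field, hf0] using div_ne_zero (hne z hz h) h

theorem mul_deriv_starlikeQuotient {f : ℂ → ℂ} {z : ℂ} (hf : AnalyticAt ℂ f z) (hz : z ≠ 0)
    (hfz : f z ≠ 0) (hf'z : deriv f z ≠ 0) :
    z * deriv (starlikeQuotient f) z = starlikeQuotient f z - starlikeQuotient f z ^ 2 +
      starlikeQuotient f z ^ 2 * (f z * deriv (deriv f) z / deriv f z ^ 2) := by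
  have heq : starlikeQuotient f =ᶠ[𝓝 z] fun v => v * deriv f v / f v :=
    (eventually_ne_nhds hz).mono fun v hv => if_neg hv
  have hD : HasDerivAt (fun v => v * deriv f v / f v)
      (((1 * deriv f z + z * deriv (deriv f) z) * f z - z * deriv f z * deriv f z) / f z ^ 2) z :=
    ((hasDerivAt_id' z).mul hf.deriv.differentiableAt.hasDerivAt).div
      hf.differentiableAt.hasDerivAt hfz
  rw [heq.deriv_eq, hD.deriv, starlikeQuotient, if_neg hz]
  field_simp
  ring

theorem stmt1 (α : ℝ) (hα0 : 0 ≤ α) (hα1 : α < 1) (f : ℂ → ℂ)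
    (hf : IsClassA f)
    (hf0 : ∀ z ∈ 𝔻, z ≠ 0 → f z ≠ 0)
    (hf' : ∀ z ∈ 𝔻, deriv f z ≠ 0)
    (hsub : Subordinate (fun z => f z * deriv (deriv f) z / (deriv f z) ^ 2)
      (fun z => 2 * (1 - (α:ℂ)) * ((1 - 2*(α:ℂ)) * z^2 + 2*z) / (1 + (1 - 2*(α:ℂ)) * z)^2)) :
    ∀ z ∈ 𝔻, α < ((if z = 0 then 1 else z * deriv f z / f z : ℂ)).re := by
  obtain ⟨w, -, -, hw𝔻, hw⟩ := hsub
  intro z hz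
  change α < (starlikeQuotient f z).re
  by_contra! hz_le
  have hp := differentiableOn_starlikeQuotient hf hf0
  have hp0 : starlikeQuotient f 0 = 1 := if_pos rfl
  have hz_lt : ‖z‖ < 1 := mem_ball_zero_iff.1 hz
  obtain ⟨z₀, hz₀z, hge, hz₀α⟩ := exists_norm_le_forall_closedBall_le_eq
    (continuous_re.comp_continuousOn (hp.continuousOn.mono (closedBall_subset_ball hz_lt)))
    (by simpa [hp0] using hα1) hz_le
  have hz₀𝔻 : z₀ ∈ 𝔻 := mem_ball_zero_iff.2 (hz₀z.trans_lt hz_lt)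
  have hz₀ : z₀ ≠ 0 := by
    rintro rfl
    exact hα1.ne' (by simpa [hp0] using hz₀α)
  have h𝔻 : 𝔻 ∈ 𝓝 z₀ := isOpen_ball.mem_nhds hz₀𝔻
  obtain ⟨k, hk, hjack⟩ := exists_one_le_mul_deriv_eq_of_re_ge hα1
    (hp.mono (ball_subset_ball (mem_ball_zero_iff.1 hz₀𝔻).le)) (hp.differentiableAt h𝔻).hasDerivAt
    hp0 hge hz₀α
  rw [mul_deriv_starlikeQuotient (hf.1.analyticAt h𝔻) hz₀ (hf0 z₀ hz₀𝔻 hz₀) (hf' z₀ hz₀𝔻)]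
    at hjack
  exact ne_dominant_of_re_eq hα0 hα1 hk hz₀α (mem_ball_zero_iff.1 (hw𝔻 z₀ hz₀𝔻)) hjack (hw z₀ hz₀𝔻)
end
end

section
/- Let ψ be a Ma-Minda function that extends to a continuous injective map on the closed unit disk. Let f ∈ 𝒜 with f(z) ≠ 0 for z ∈ 𝔻\{0}. Then f ∈ S*(ψ) if and only if for every z ∈ 𝔻\{0} and every t ∈ [0, 2π), z f'(z) − ψ(e^{it}) f(z) ≠ 0. -/
open Complex Metric Set

noncomputable section

/-!
If `z f'/f = ψ ∘ ω` with `|ω| < 1`, then `z f'/f` never takes a value `ψ (exp (i t))`, because `ψ`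
is injective on the closed disk. Conversely, `G = z f'/f` (set to `1` at `0`) is holomorphic on
`𝔻`, lies in `ψ(𝔻)` at `0`, and by hypothesis avoids `ψ(∂𝔻)`, which contains the boundary of the
open set `ψ(𝔻)`. As `𝔻` is connected, `G(𝔻) ⊆ ψ(𝔻)`, and `ω = ψ⁻¹ ∘ G` is holomorphic since an
injective holomorphic map has nonvanishing derivative and hence a holomorphic inverse.
-/

open Filter Topology

theorem Complex.exists_ne_pow_eq_pow_of_mem_nhds {S : Set ℂ} (hS : S ∈ 𝓝 0) {n : ℕ}
    (hn : 2 ≤ n) : ∃ u ∈ S, ∃ v ∈ S, u ≠ v ∧ u ^ n = v ^ n := by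
  obtain ⟨ε, hε, hball⟩ := Metric.mem_nhds_iff.mp hS
  have hζ := Complex.isPrimitiveRoot_exp n (by omega)
  set ζ := Complex.exp (2 * Real.pi * Complex.I / n)
  set u : ℂ := ((ε / 2 : ℝ) : ℂ)
  have hu : ‖u‖ < ε := by
    rw [Complex.norm_real, Real.norm_of_nonneg (by positivity)]; linarith
  have hu0 : u ≠ 0 := by simp [u, hε.ne']
  refine ⟨u, hball (mem_ball_zero_iff.mpr hu), ζ * u, hball ?_, ?_, ?_⟩
  · rwa [mem_ball_zero_iff, norm_mul, hζ.norm'_eq_one (by omega), one_mul]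
  · intro h
    exact hζ.ne_one (by omega) (mul_right_cancel₀ hu0 (by rw [one_mul, ← h]))
  · rw [mul_pow, hζ.pow_eq_one, one_mul]

theorem AnalyticAt.exists_eventuallyEq_pow {g : ℂ → ℂ} {b : ℂ} (hg : AnalyticAt ℂ g b)
    (hgb : g b ≠ 0) {n : ℕ} (hn : n ≠ 0) :
    ∃ k : ℂ → ℂ, AnalyticAt ℂ k b ∧ k b ≠ 0 ∧ ∀ᶠ z in 𝓝 b, g z = k z ^ n := by
  obtain ⟨c, hc⟩ := IsAlgClosed.exists_pow_nat_eq (g b) (Nat.pos_of_ne_zero hn)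
  have hn' : (n : ℂ) ≠ 0 := Nat.cast_ne_zero.mpr hn
  have hslit : g b / g b ∈ Complex.slitPlane := by
    rw [div_self hgb]; exact Complex.one_mem_slitPlane
  refine ⟨fun z => c * Complex.exp (Complex.log (g z / g b) / n),
    analyticAt_const.mul (((hg.div analyticAt_const hgb).clog hslit).div analyticAt_const hn').cexp,
    by simpa [div_self hgb] using fun h : c = 0 => hgb (by simp [← hc, h, hn]), ?_⟩
  filter_upwards [hg.continuousAt.eventually_ne hgb] with z hz
  rw [mul_pow, hc, ← Complex.exp_nat_mul, mul_div_cancel₀ _ hn',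
    Complex.exp_log (div_ne_zero hz hgb), mul_div_cancel₀ _ hgb]

theorem HasStrictDerivAt.not_injOn_pow {φ : ℂ → ℂ} {φ' b : ℂ} (hφ : HasStrictDerivAt φ φ' b)
    (hφ' : φ' ≠ 0) (hφb : φ b = 0) {n : ℕ} (hn : 2 ≤ n) {T : Set ℂ} (hT : T ∈ 𝓝 b) :
    ¬ InjOn (fun z => φ z ^ n) T := by
  intro hinj
  have himage : φ '' T ∈ 𝓝 0 := by
    rw [← hφb, ← hφ.map_nhds_eq hφ']
    exact image_mem_map hT
  obtain ⟨_, ⟨x, hx, rfl⟩, _, ⟨y, hy, rfl⟩, hne, hpow⟩ :=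
    Complex.exists_ne_pow_eq_pow_of_mem_nhds himage hn
  exact hne (congrArg φ (hinj hx hy hpow))

theorem AnalyticAt.deriv_ne_zero_of_injOn {ψ : ℂ → ℂ} {b : ℂ} {s : Set ℂ}
    (hψ : AnalyticAt ℂ ψ b) (hs : s ∈ 𝓝 b) (hi : InjOn ψ s) : deriv ψ b ≠ 0 := by
  intro hderiv
  -- Near `b`, `ψ - ψ b = φ ^ n` with `n ≥ 2` and `φ` a local diffeomorphism: `ψ` is `n`-to-one.
  have hfin : analyticOrderAt (ψ · - ψ b) b ≠ ⊤ := by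
    rw [Ne, analyticOrderAt_eq_top]
    intro hconst
    have hb : ∀ᶠ z in 𝓝[≠] b, z = b := nhdsWithin_le_nhds <| by
      filter_upwards [hconst, hs] with z hz hzs
      exact hi hzs (mem_of_mem_nhds hs) (sub_eq_zero.mp hz)
    obtain ⟨z, hz, hzb⟩ := (hb.and self_mem_nhdsWithin).exists
    exact hzb hz
  have htwo : 2 ≤ analyticOrderAt (ψ · - ψ b) b := by
    rw [← hψ.analyticOrderAt_deriv_add_one]
    have : analyticOrderAt (deriv ψ) b ≠ 0 := hψ.deriv.analyticOrderAt_ne_zero.mpr hderiv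
    calc (2 : ℕ∞) = 1 + 1 := by norm_num
      _ ≤ _ := by gcongr; exact Order.one_le_iff_ne_zero.mpr this
  obtain ⟨n, hn⟩ := ENat.ne_top_iff_exists.mp hfin
  obtain ⟨g, hg, hgb, hψg⟩ := (hψ.sub analyticAt_const).analyticOrderAt_eq_natCast.mp hn.symm
  rw [← hn] at htwo
  have htwo : 2 ≤ n := by exact_mod_cast htwo
  obtain ⟨k, hk, hkb, hgk⟩ := hg.exists_eventuallyEq_pow hgb (n := n) (by omega)
  have hφ : HasStrictDerivAt (fun z => (z - b) * k z) (k b) b := by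
    have hsub : HasStrictDerivAt (fun z => z - b) 1 b := (hasStrictDerivAt_id b).sub_const b
    simpa using hsub.fun_mul hk.hasStrictDerivAt
  obtain ⟨T, hT, hTψ⟩ := ((hψg.and hgk).and hs).exists_mem
  refine hφ.not_injOn_pow hkb (by simp) htwo hT ?_
  refine ((sub_left_injective (b := ψ b)).comp_injOn (hi.mono fun z hz => (hTψ z hz).2)).congr ?_
  intro z hz
  obtain ⟨⟨h1, h2⟩, -⟩ := hTψ z hz
  simpa [h2, mul_pow] using h1

section InjOnHolomorphic

variable {ψ : ℂ → ℂ} {s : Set ℂ}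

theorem DifferentiableOn.isOpen_image_of_injOn (hd : DifferentiableOn ℂ ψ s) (hs : IsOpen s)
    (hi : InjOn ψ s) : IsOpen (ψ '' s) := by
  rw [isOpen_iff_mem_nhds]
  rintro _ ⟨b, hb, rfl⟩
  have hψ := hd.analyticAt (hs.mem_nhds hb)
  rw [← hψ.hasStrictDerivAt.map_nhds_eq (hψ.deriv_ne_zero_of_injOn (hs.mem_nhds hb) hi)]
  exact image_mem_map (hs.mem_nhds hb)

theorem DifferentiableOn.differentiableOn_invFunOn (hd : DifferentiableOn ℂ ψ s) (hs : IsOpen s)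
    (hi : InjOn ψ s) : DifferentiableOn ℂ (Function.invFunOn ψ s) (ψ '' s) := by
  rintro _ ⟨b, hb, rfl⟩
  have hψ := hd.analyticAt (hs.mem_nhds hb)
  have hleft : ∀ᶠ z in 𝓝 b, Function.invFunOn ψ s (ψ z) = z :=
    eventually_of_mem (hs.mem_nhds hb) fun z hz => hi.leftInvOn_invFunOn hz
  exact (hψ.hasStrictDerivAt.to_local_left_inverse (hψ.deriv_ne_zero_of_injOn (hs.mem_nhds hb) hi)
    hleft).hasDerivAt.differentiableAt.differentiableWithinAt

end InjOnHolomorphic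

theorem ContinuousOn.mapsTo_image_ball {X E : Type*} [TopologicalSpace X] [TopologicalSpace E]
    [T2Space E] {ψ : ℂ → E} {c : ℂ} {r : ℝ} (hψ : ContinuousOn ψ (closedBall c r))
    (hopen : IsOpen (ψ '' ball c r)) {G : X → E} {U : Set X} (hU : IsPreconnected U)
    (hG : ContinuousOn G U) (hmeet : ∃ z ∈ U, G z ∈ ψ '' ball c r)
    (hsphere : ∀ z ∈ U, G z ∉ ψ '' sphere c r) : MapsTo G U (ψ '' ball c r) := by
  rw [mapsTo_iff_image_subset]
  refine (hU.image G hG).subset_of_closure_inter_subset hopen ?_ ?_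
  · obtain ⟨z, hz, hGz⟩ := hmeet
    exact ⟨G z, mem_image_of_mem G hz, hGz⟩
  · rintro _ ⟨hclos, z, hz, rfl⟩
    have hcl : closure (ψ '' ball c r) ⊆ ψ '' closedBall c r :=
      closure_minimal (image_mono ball_subset_closedBall)
        ((isCompact_closedBall c r).image_of_continuousOn hψ).isClosed
    obtain ⟨w, hw, hwG⟩ := hcl hclos
    rw [← ball_union_sphere] at hw
    rcases hw with hw | hw
    · exact ⟨w, hw, hwG⟩
    · exact absurd ⟨w, hw, hwG⟩ (hsphere z hz)

theorem subordinate_of_mapsTo {G ψ : ℂ → ℂ} (hψ : DifferentiableOn ℂ ψ 𝔻) (hi : InjOn ψ 𝔻)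
    (hG : DifferentiableOn ℂ G 𝔻) (hG0 : G 0 = ψ 0) (hmaps : MapsTo G 𝔻 (ψ '' 𝔻)) :
    Subordinate G ψ := by
  have h0 : (0 : ℂ) ∈ 𝔻 := mem_ball_self one_pos
  refine ⟨Function.invFunOn ψ 𝔻 ∘ G,
    (hψ.differentiableOn_invFunOn isOpen_ball hi).comp hG hmaps, ?_,
    fun z hz => Function.invFunOn_mem (hmaps hz), fun z hz => (Function.invFunOn_eq (hmaps hz)).symm⟩
  rw [Function.comp_apply, hG0]
  exact hi.leftInvOn_invFunOn h0

theorem Subordinate.ne_apply_of_norm_eq_one {G ψ : ℂ → ℂ} (h : Subordinate G ψ)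
    (hi : InjOn ψ (closedBall 0 1)) {z w : ℂ} (hz : z ∈ 𝔻) (hw : ‖w‖ = 1) : G z ≠ ψ w := by
  obtain ⟨ω, -, -, hωD, hωG⟩ := h
  rw [hωG z hz]
  intro hψ
  have hωw := hi (ball_subset_closedBall (hωD z hz)) (mem_closedBall_zero_iff.mpr hw.le) hψ
  have := mem_ball_zero_iff.mp (hωD z hz)
  rw [hωw, hw] at this
  exact lt_irrefl 1 this

theorem Complex.exists_mem_Ico_exp_eq {w : ℂ} (hw : ‖w‖ = 1) :
    ∃ t ∈ Ico (0 : ℝ) (2 * Real.pi), Complex.exp (Complex.I * t) = w := by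
  obtain ⟨θ, rfl⟩ := (Complex.norm_eq_one_iff w).mp hw
  have hper : Function.Periodic (fun x : ℝ => Complex.exp (x * Complex.I)) (2 * Real.pi) :=
    fun x => by simpa using Complex.exp_mul_I_periodic x
  obtain ⟨t, ht, heq⟩ := hper.exists_mem_Ico₀ Real.two_pi_pos θ
  exact ⟨t, ht, by rw [mul_comm]; exact heq.symm⟩

def starlikeRatio (f : ℂ → ℂ) (z : ℂ) : ℂ := if z = 0 then 1 else z * deriv f z / f z

theorem starlikeRatio_eq_iff {f : ℂ → ℂ} {z c : ℂ} (hz : z ≠ 0) (hfz : f z ≠ 0) :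
    starlikeRatio f z = c ↔ z * deriv f z - c * f z = 0 := by
  rw [starlikeRatio, if_neg hz, div_eq_iff hfz, sub_eq_zero]

theorem IsClassA.differentiableOn_starlikeRatio {f : ℂ → ℂ} (hf : IsClassA f)
    (hf0 : ∀ z ∈ 𝔻, z ≠ 0 → f z ≠ 0) : DifferentiableOn ℂ (starlikeRatio f) 𝔻 := by
  obtain ⟨hfd, hf00, hf'0⟩ := hf
  have hslope : DifferentiableOn ℂ (dslope f 0) 𝔻 :=
    (differentiableOn_dslope (isOpen_ball.mem_nhds (mem_ball_self one_pos))).mpr hfd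
  have hslope_eq : ∀ z, z ≠ 0 → dslope f 0 z = f z / z := fun z hz => by
    rw [dslope_of_ne f hz, slope_def_field, hf00, sub_zero, sub_zero]
  have hslope_ne : ∀ z ∈ 𝔻, dslope f 0 z ≠ 0 := by
    intro z hz
    rcases eq_or_ne z 0 with rfl | hz0
    · simp [hf'0]
    · rw [hslope_eq z hz0]; exact div_ne_zero (hf0 z hz hz0) hz0
  refine ((hfd.deriv isOpen_ball).div hslope hslope_ne).congr fun z hz => ?_
  rcases eq_or_ne z 0 with rfl | hz0
  · simp [starlikeRatio, hf'0]
  · rw [starlikeRatio, if_neg hz0, Pi.div_apply, hslope_eq z hz0, div_div_eq_mul_div, mul_comm]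

theorem stmt2 (ψ f : ℂ → ℂ) (hψ : MaMinda ψ)
    (hψc : ContinuousOn ψ (Metric.closedBall 0 1))
    (hψi : Set.InjOn ψ (Metric.closedBall 0 1))
    (hf : IsClassA f) (hf0 : ∀ z ∈ 𝔻, z ≠ 0 → f z ≠ 0) :
    StarlikeMM ψ f ↔
      ∀ z ∈ 𝔻, z ≠ 0 → ∀ t ∈ Set.Ico (0:ℝ) (2*Real.pi),
        z * deriv f z - ψ (Complex.exp (Complex.I * t)) * f z ≠ 0 := by
  obtain ⟨hψd, hψinj, -, hψ0, -⟩ := hψ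
  have h0 : (0 : ℂ) ∈ 𝔻 := mem_ball_self one_pos
  have hG0 : starlikeRatio f 0 = ψ 0 := by rw [starlikeRatio, if_pos rfl, hψ0]
  rw [show StarlikeMM ψ f ↔ Subordinate (starlikeRatio f) ψ from
    ⟨fun h => h.2.2, fun h => ⟨hf, hf0, h⟩⟩]
  constructor
  · rintro hsub z hz hz0 t - heq
    exact hsub.ne_apply_of_norm_eq_one hψi hz (Complex.norm_exp_I_mul_ofReal t)
      ((starlikeRatio_eq_iff hz0 (hf0 z hz hz0)).mpr heq)
  · intro H
    have hratio := hf.differentiableOn_starlikeRatio hf0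
    refine subordinate_of_mapsTo hψd hψinj hratio hG0 ?_
    refine hψc.mapsTo_image_ball (hψd.isOpen_image_of_injOn isOpen_ball hψinj)
      (convex_ball 0 1).isPreconnected hratio.continuousOn
      ⟨0, h0, 0, h0, hG0.symm⟩ ?_
    rintro z hz ⟨w, hw, hwz⟩
    obtain ⟨t, ht, rfl⟩ := Complex.exists_mem_Ico_exp_eq (mem_sphere_zero_iff_norm.mp hw)
    rcases eq_or_ne z 0 with rfl | hz0
    · have := hψi (sphere_subset_closedBall hw) (ball_subset_closedBall h0)
        (hwz.trans hG0)
      simp [this] at hw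
    · exact H z hz hz0 t ht ((starlikeRatio_eq_iff hz0 (hf0 z hz hz0)).mp hwz.symm)
end
end

section
/- Let ψ be a Ma-Minda function that extends to a continuous injective map on the closed unit disk. Let f(z) = z + Σ_{k≥2} a_k z^k ∈ 𝒜 with f(z) ≠ 0 for z ∈ 𝔻\{0}. If for every t ∈ [0, 2π) one has Σ_{k=2}^∞ |(k − ψ(e^{it}))/(1 − ψ(e^{it}))| · |a_k| ≤ 1 (note ψ(e^{it}) ≠ 1 since ψ is injective on the closed disk and ψ(0) = 1), then f ∈ S*(ψ). -/
open Complex Metric Set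

noncomputable section

open Filter Topology

/-! The function `p z = z f'(z) / f(z)` (with `p 0 = 1`) is holomorphic on `𝔻`. For
`w = ψ(e^{it})` the coefficient condition says that in
`z f' - w f = (1 - w) z + ∑_{k ≥ 2} (k - w) a_k z^k` the linear term dominates the tail on
`𝔻 \ {0}`, so `p` omits every value of `ψ` on the unit circle. As `ψ(𝔻)` is open and its closure
lies in `ψ(𝔻) ∪ ψ(∂𝔻)`, the connected set `p(𝔻) ∋ 1 = ψ(0)` stays in `ψ(𝔻)`, and `ψ⁻¹ ∘ p` is
the Schwarz function: it is holomorphic because an injective holomorphic map has nonvanishing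
derivative. -/

theorem Complex.exists_ne_pow_eq_pow_of_mem_nhds_zero {s : Set ℂ} (hs : s ∈ 𝓝 0) {m : ℕ}
    (hm : 2 ≤ m) : ∃ x ∈ s, ∃ y ∈ s, x ≠ y ∧ x ^ m = y ^ m := by
  obtain ⟨ε, hε, hball⟩ := Metric.mem_nhds_iff.mp hs
  have hζ := isPrimitiveRoot_exp m (by omega)
  have hx : ((ε / 2 : ℝ) : ℂ) ≠ 0 := by exact_mod_cast (half_pos hε).ne'
  have hmem : ∀ c : ℂ, ‖c‖ = 1 → ((ε / 2 : ℝ) : ℂ) * c ∈ s := fun c hc => hball <| by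
    rw [mem_ball_zero_iff, norm_mul, hc, mul_one, norm_real, Real.norm_of_nonneg (by positivity)]
    linarith
  refine ⟨_, hmem 1 norm_one, _, hmem _ (hζ.norm'_eq_one (by omega)), ?_, ?_⟩
  · rw [Ne, mul_right_inj' hx]
    exact (hζ.ne_one (by omega)).symm
  · rw [mul_pow, mul_pow, hζ.pow_eq_one, one_pow]

theorem AnalyticAt.exists_pow_eq {h : ℂ → ℂ} {z₀ : ℂ} (hh : AnalyticAt ℂ h z₀) (h0 : h z₀ ≠ 0)
    {m : ℕ} (hm : m ≠ 0) : ∃ r : ℂ → ℂ, AnalyticAt ℂ r z₀ ∧ r z₀ ≠ 0 ∧ ∀ z, r z ^ m = h z := by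
  obtain ⟨c, hc⟩ := IsAlgClosed.exists_pow_nat_eq (h z₀) (Nat.pos_of_ne_zero hm)
  refine ⟨fun z => c * (h z / h z₀) ^ (m⁻¹ : ℂ), ?_, ?_, fun z => ?_⟩
  · refine analyticAt_const.mul ((hh.div analyticAt_const h0).cpow analyticAt_const ?_)
    simp [h0]
  · simp only [div_self h0, one_cpow, mul_one]
    rintro rfl
    exact h0 (by rw [← hc, zero_pow hm])
  · rw [mul_pow, cpow_nat_inv_pow _ hm, hc, mul_div_cancel₀ _ h0]

theorem AnalyticAt.exists_two_le_eventually_eq_add_pow_mul {𝕜 : Type*}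
    [NontriviallyNormedField 𝕜] {f : 𝕜 → 𝕜} {z₀ : 𝕜} (hf : AnalyticAt 𝕜 f z₀)
    (hconst : ¬∀ᶠ z in 𝓝 z₀, f z = f z₀) (hderiv : deriv f z₀ = 0) :
    ∃ m, 2 ≤ m ∧ ∃ h : 𝕜 → 𝕜, AnalyticAt 𝕜 h z₀ ∧ h z₀ ≠ 0 ∧
      ∀ᶠ z in 𝓝 z₀, f z = f z₀ + (z - z₀) ^ m * h z := by
  have hfa : AnalyticAt 𝕜 (fun z => f z - f z₀) z₀ := hf.sub analyticAt_const
  obtain ⟨m, h, hh, hh0, hfh⟩ := hfa.exists_eventuallyEq_pow_smul_nonzero_iff.mpr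
    (by simpa only [sub_eq_zero] using hconst)
  refine ⟨m, ?_, h, hh, hh0, hfh.mono fun z hz => by rw [← smul_eq_mul, ← hz, add_sub_cancel]⟩
  by_contra! hm
  interval_cases m
  · exact hh0 (by simpa using hfh.self_of_nhds.symm)
  · have hd : HasDerivAt (fun z => (z - z₀) ^ 1 • h z) (h z₀) z₀ := by
      simpa [Pi.mul_def] using
        ((hasDerivAt_id z₀).sub_const z₀).mul hh.differentiableAt.hasDerivAt
    have := Filter.EventuallyEq.deriv_eq hfh
    rw [deriv_sub_const, hderiv, hd.deriv] at this
    exact hh0 this.symm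

theorem AnalyticAt.deriv_ne_zero_of_injOn_s3 {f : ℂ → ℂ} {s : Set ℂ} {z₀ : ℂ}
    (hf : AnalyticAt ℂ f z₀) (hs : s ∈ 𝓝 z₀) (hinj : Set.InjOn f s) : deriv f z₀ ≠ 0 := by
  intro hderiv
  have hconst : ¬∀ᶠ z in 𝓝 z₀, f z = f z₀ := fun hconst => by
    obtain ⟨z, ⟨hfz, hzs⟩, hz⟩ := (((hconst.and hs).filter_mono nhdsWithin_le_nhds).and
      (self_mem_nhdsWithin (s := {z₀}ᶜ))).exists
    exact hz (hinj hzs (mem_of_mem_nhds hs) hfz)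
  obtain ⟨m, hm, h, hh, hh0, hfh⟩ := hf.exists_two_le_eventually_eq_add_pow_mul hconst hderiv
  -- `f = f z₀ + G ^ m` near `z₀`, where `G` maps a neighbourhood of `z₀` onto one of `0`, on
  -- which `· ^ m` is not injective.
  obtain ⟨r, hr, hr0, hrh⟩ := hh.exists_pow_eq hh0 (by omega : m ≠ 0)
  set G : ℂ → ℂ := fun z => (z - z₀) * r z
  have hG : HasStrictDerivAt G (r z₀) z₀ := by
    simpa [Pi.mul_def] using
      HasStrictDerivAt.mul ((hasStrictDerivAt_id z₀).sub_const z₀) hr.hasStrictDerivAt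
  set S := {z | z ∈ s ∧ f z = f z₀ + G z ^ m}
  have hS : S ∈ 𝓝 z₀ := by
    filter_upwards [hs, hfh] with z hz hfz
    exact ⟨hz, by rw [hfz, mul_pow, hrh]⟩
  have hGS : G '' S ∈ 𝓝 0 := by
    have := hG.map_nhds_eq hr0
    simp only [G, sub_self, zero_mul] at this
    exact this ▸ image_mem_map hS
  obtain ⟨_, ⟨z₁, ⟨hz₁, hfz₁⟩, rfl⟩, _, ⟨z₂, ⟨hz₂, hfz₂⟩, rfl⟩, hne, hpow⟩ :=
    Complex.exists_ne_pow_eq_pow_of_mem_nhds_zero hGS hm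
  exact hne (congrArg G (hinj hz₁ hz₂ (by rw [hfz₁, hfz₂, hpow])))

namespace Set.InjOn

variable {ψ : ℂ → ℂ} {U : Set ℂ}

theorem isOpen_image_of_differentiableOn (hi : InjOn ψ U) (hU : IsOpen U)
    (hd : DifferentiableOn ℂ ψ U) : IsOpen (ψ '' U) := by
  rw [isOpen_iff_mem_nhds]
  rintro _ ⟨x, hx, rfl⟩
  have ha := hd.analyticAt (hU.mem_nhds hx)
  rw [← ha.hasStrictDerivAt.map_nhds_eq (ha.deriv_ne_zero_of_injOn_s3 (hU.mem_nhds hx) hi)]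
  exact image_mem_map (hU.mem_nhds hx)

theorem differentiableOn_invFunOn (hi : InjOn ψ U) (hU : IsOpen U)
    (hd : DifferentiableOn ℂ ψ U) : DifferentiableOn ℂ (Function.invFunOn ψ U) (ψ '' U) := by
  rintro _ ⟨x, hx, rfl⟩
  have ha := hd.analyticAt (hU.mem_nhds hx)
  have hψ := ha.hasStrictDerivAt
  have h0 := ha.deriv_ne_zero_of_injOn_s3 (hU.mem_nhds hx) hi
  set L := hψ.localInverse ψ (deriv ψ x) x h0
  have hL : HasStrictDerivAt L _ (ψ x) := hψ.to_localInverse h0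
  have hLx : L (ψ x) = x := (hψ.eventually_left_inverse h0).self_of_nhds
  have hLU : ∀ᶠ y in 𝓝 (ψ x), L y ∈ U :=
    hL.hasDerivAt.continuousAt.preimage_mem_nhds (by rw [hLx]; exact hU.mem_nhds hx)
  have hinv : Function.invFunOn ψ U =ᶠ[𝓝 (ψ x)] L := by
    filter_upwards [hLU, hψ.eventually_right_inverse h0] with y hy hψy
    rw [← hψy, hi.leftInvOn_invFunOn hy, hψy]
  exact (hL.hasDerivAt.differentiableAt.congr_of_eventuallyEq hinv).differentiableWithinAt

end Set.InjOn

theorem Complex.exists_mem_Ico_exp_I_mul_eq {u : ℂ} (hu : ‖u‖ = 1) :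
    ∃ t ∈ Ico 0 (2 * Real.pi), exp (I * t) = u := by
  obtain ⟨θ, rfl⟩ := (norm_eq_one_iff u).mp hu
  refine ⟨toIcoMod Real.two_pi_pos 0 θ, toIcoMod_mem_Ico' _ _, ?_⟩
  rw [← self_sub_toIcoDiv_zsmul, mul_comm, ofReal_sub, ofReal_zsmul, ofReal_mul, ofReal_ofNat,
    exp_mul_I_periodic.sub_zsmul_eq]

theorem subset_image_of_isPreconnected {ψ : ℂ → ℂ} {K U T : Set ℂ} (hK : IsCompact K)
    (hUK : U ⊆ K) (hψ : ContinuousOn ψ K) (hU : IsOpen (ψ '' U)) (hT : IsPreconnected T)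
    (hmeet : (T ∩ ψ '' U).Nonempty) (hfront : Disjoint T (ψ '' (K \ U))) : T ⊆ ψ '' U := by
  refine hT.subset_of_closure_inter_subset hU hmeet ?_
  rintro y ⟨hy, hyT⟩
  obtain ⟨x, hxK, rfl⟩ :=
    closure_minimal (image_mono hUK) (hK.image_of_continuousOn hψ).isClosed hy
  by_contra hxU
  exact hfront.notMem_of_mem_left hyT ⟨x, ⟨hxK, fun hx => hxU ⟨x, hx, rfl⟩⟩, rfl⟩

theorem subordinate_of_mapsTo_s3 {p ψ : ℂ → ℂ} (hψd : DifferentiableOn ℂ ψ 𝔻)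
    (hψi : InjOn ψ 𝔻) (hpd : DifferentiableOn ℂ p 𝔻) (hp0 : p 0 = ψ 0) (hp : MapsTo p 𝔻 (ψ '' 𝔻)) :
    Subordinate p ψ := by
  have h0 : (0 : ℂ) ∈ 𝔻 := mem_ball_self one_pos
  refine ⟨Function.invFunOn ψ 𝔻 ∘ p,
    (hψi.differentiableOn_invFunOn isOpen_ball hψd).comp hpd hp, ?_,
    fun z hz => Function.invFunOn_mem (hp hz), fun z hz => (Function.invFunOn_eq (hp hz)).symm⟩
  rw [Function.comp_apply, hp0, hψi.leftInvOn_invFunOn h0]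

open FormalMultilinearSeries in
theorem hasFPowerSeriesOnBall_ofScalars_of_hasSum {f : ℂ → ℂ} {a : ℕ → ℂ} {r : NNReal}
    (hr : 0 < r) (hf : ∀ z ∈ ball (0 : ℂ) r, HasSum (fun n => a n * z ^ n) (f z)) :
    HasFPowerSeriesOnBall f (ofScalars ℂ a) 0 r where
  r_le := by
    refine ENNReal.le_of_forall_nnreal_lt fun s hs => (ofScalars ℂ a).le_radius_of_tendsto
      (l := 0) ?_
    have hs' : ((s : ℝ) : ℂ) ∈ ball (0 : ℂ) r := by
      simpa using (ENNReal.coe_lt_coe.mp hs)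
    simpa [ofScalars_norm] using (hf _ hs').summable.tendsto_atTop_zero.norm
  r_pos := ENNReal.coe_pos.mpr hr
  hasSum hy := by
    simpa [ofScalars_apply_eq, mul_comm] using hf _ (by simpa using hy)

theorem HasFPowerSeriesOnBall.hasSum_mul_deriv {f : ℂ → ℂ} {a : ℕ → ℂ} {r : ENNReal}
    (hf : HasFPowerSeriesOnBall f (FormalMultilinearSeries.ofScalars ℂ a) 0 r) {z : ℂ}
    (hz : ‖z‖ₑ < r) : HasSum (fun n => n * a n * z ^ n) (z * deriv f z) := by
  have := (ContinuousLinearMap.apply ℂ ℂ z).hasSum (hf.fderiv.hasSum (by simpa using hz))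
  rw [← toSpanSingleton_deriv] at this
  refine (hasSum_nat_add_iff' 1).mp ?_
  simp only [ContinuousLinearMap.apply_apply, zero_add, ContinuousLinearMap.toSpanSingleton_apply,
    smul_eq_mul, FormalMultilinearSeries.derivSeries_apply_diag,
    FormalMultilinearSeries.ofScalars_apply_eq, nsmul_eq_mul] at this
  simpa [mul_comm, mul_assoc, mul_left_comm] using this

theorem HasSum.ne_zero_of_tsum_norm_le {c : ℕ → ℂ} {z s : ℂ}
    (hs : HasSum (fun n => c n * z ^ n) s) (hc0 : c 0 = 0) (hc1 : c 1 ≠ 0)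
    (hsum : Summable fun k => ‖c (k + 2)‖) (hle : ∑' k, ‖c (k + 2)‖ ≤ ‖c 1‖) (hz0 : z ≠ 0)
    (hz1 : ‖z‖ < 1) : s ≠ 0 := by
  have htail : HasSum (fun k => c (k + 2) * z ^ (k + 2)) (s - c 1 * z) := by
    simpa [Finset.sum_range_succ, hc0] using (hasSum_nat_add_iff' 2).mpr hs
  have hbound : ‖s - c 1 * z‖ ≤ (∑' k, ‖c (k + 2)‖) * ‖z‖ ^ 2 :=
    htail.norm_le_of_bounded (hsum.hasSum.mul_right _) fun k => by
      rw [norm_mul, norm_pow]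
      exact mul_le_mul_of_nonneg_left (pow_le_pow_of_le_one (norm_nonneg _) hz1.le (by omega))
        (norm_nonneg _)
  have hz : 0 < ‖z‖ := norm_pos_iff.mpr hz0
  have hc : 0 < ‖c 1‖ := norm_pos_iff.mpr hc1
  intro hs0
  rw [hs0, zero_sub, norm_neg, norm_mul] at hbound
  nlinarith [mul_le_mul_of_nonneg_right hle (sq_nonneg ‖z‖), mul_pos hc hz]

theorem mul_deriv_sub_mul_ne_zero {f : ℂ → ℂ} {a : ℕ → ℂ} (ha0 : a 0 = 0) (ha1 : a 1 = 1)
    (hrep : ∀ z ∈ 𝔻, HasSum (fun k => a k * z ^ k) (f z)) {w : ℂ} (hw : w ≠ 1)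
    (hsum : Summable fun k : ℕ => ‖(((k + 2 : ℕ) : ℂ) - w) / (1 - w)‖ * ‖a (k + 2)‖)
    (hle : ∑' k : ℕ, ‖(((k + 2 : ℕ) : ℂ) - w) / (1 - w)‖ * ‖a (k + 2)‖ ≤ 1)
    {z : ℂ} (hz : z ∈ 𝔻) (hz0 : z ≠ 0) : z * deriv f z - w * f z ≠ 0 := by
  have hf := hasFPowerSeriesOnBall_ofScalars_of_hasSum one_pos (by simpa [𝔻] using hrep)
  have hz1 : ‖z‖ < 1 := mem_ball_zero_iff.mp hz
  have hs : HasSum (fun n : ℕ => ((n : ℂ) - w) * a n * z ^ n) (z * deriv f z - w * f z) := by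
    have hz1' : ‖z‖ₑ < (1 : NNReal) := by
      rw [ENNReal.coe_one, ← ofReal_norm, ENNReal.ofReal_lt_one]
      exact hz1
    simpa only [sub_mul, mul_assoc] using
      (hf.hasSum_mul_deriv hz1').sub ((hrep z hz).mul_left w)
  have h1w : (1 : ℂ) - w ≠ 0 := sub_ne_zero.mpr (Ne.symm hw)
  have hterm : ∀ k : ℕ, ‖(((k + 2 : ℕ) : ℂ) - w) * a (k + 2)‖ =
      ‖(((k + 2 : ℕ) : ℂ) - w) / (1 - w)‖ * ‖a (k + 2)‖ * ‖1 - w‖ := fun k => by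
    rw [norm_div, norm_mul, div_mul_eq_mul_div, div_mul_cancel₀ _ (norm_ne_zero_iff.mpr h1w)]
  refine hs.ne_zero_of_tsum_norm_le (c := fun n : ℕ => ((n : ℂ) - w) * a n) (by simp [ha0])
    (by simpa [ha1] using h1w) ?_ ?_ hz0 hz1
  · simpa only [hterm] using hsum.mul_right ‖1 - w‖
  · simp only [hterm, tsum_mul_right, Nat.cast_one, ha1, mul_one]
    exact mul_le_of_le_one_left (norm_nonneg _) hle

theorem IsClassA.differentiableOn_mul_deriv_div {f : ℂ → ℂ} (hf : IsClassA f)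
    (hf0 : ∀ z ∈ 𝔻, z ≠ 0 → f z ≠ 0) :
    DifferentiableOn ℂ (fun z => if z = 0 then 1 else z * deriv f z / f z) 𝔻 := by
  have h0 : 𝔻 ∈ 𝓝 (0 : ℂ) := ball_mem_nhds 0 one_pos
  have hslope : ∀ z ∈ 𝔻, dslope f 0 z ≠ 0 := fun z hz => by
    rcases eq_or_ne z 0 with rfl | hz0
    · simp [hf.2.2]
    · simpa [dslope_of_ne _ hz0, slope_def_field, hf.2.1, hz0] using hf0 z hz hz0
  refine ((hf.1.deriv isOpen_ball).div ((differentiableOn_dslope h0).mpr hf.1) hslope).congr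
    fun z hz => ?_
  rcases eq_or_ne z 0 with rfl | hz0
  · simp [hf.2.2]
  · simp only [hz0, ↓reduceIte, Pi.div_apply, dslope_of_ne _ hz0, slope_def_field, hf.2.1,
      sub_zero]
    field_simp

theorem stmt3 (ψ f : ℂ → ℂ) (a : ℕ → ℂ) (hψ : MaMinda ψ)
    (hψc : ContinuousOn ψ (Metric.closedBall 0 1))
    (hψi : Set.InjOn ψ (Metric.closedBall 0 1))
    (hf : IsClassA f) (ha0 : a 0 = 0) (ha1 : a 1 = 1)
    (hrep : ∀ z ∈ 𝔻, HasSum (fun k => a k * z ^ k) (f z))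
    (hf0 : ∀ z ∈ 𝔻, z ≠ 0 → f z ≠ 0)
    (hcoef : ∀ t ∈ Set.Ico (0:ℝ) (2*Real.pi),
      Summable (fun k : ℕ =>
        ‖(((k+2 : ℕ) : ℂ) - ψ (Complex.exp (Complex.I*t))) /
          (1 - ψ (Complex.exp (Complex.I*t)))‖ * ‖a (k+2)‖) ∧
      ∑' k : ℕ, ‖(((k+2 : ℕ) : ℂ) - ψ (Complex.exp (Complex.I*t))) /
          (1 - ψ (Complex.exp (Complex.I*t)))‖ * ‖a (k+2)‖ ≤ 1) :
    StarlikeMM ψ f := by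
  obtain ⟨hψd, hψi𝔻, -, hψ0, -⟩ := hψ
  set p : ℂ → ℂ := fun z => if z = 0 then 1 else z * deriv f z / f z
  have h0 : (0 : ℂ) ∈ 𝔻 := mem_ball_self one_pos
  have hpd : DifferentiableOn ℂ p 𝔻 := hf.differentiableOn_mul_deriv_div hf0
  have hp0 : p 0 = ψ 0 := by simp [p, hψ0]
  have hfront : ∀ u ∈ sphere (0 : ℂ) 1, ∀ z ∈ 𝔻, p z ≠ ψ u := by
    intro u hu z hz
    have hu1 : ‖u‖ = 1 := mem_sphere_zero_iff_norm.mp hu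
    have hψu : ψ u ≠ 1 := fun h => by
      have := hψi (sphere_subset_closedBall hu) (mem_closedBall_self zero_le_one)
        (h.trans hψ0.symm)
      simp [this] at hu1
    rcases eq_or_ne z 0 with rfl | hz0
    · simpa [p] using hψu.symm
    obtain ⟨t, ht, rfl⟩ := exists_mem_Ico_exp_I_mul_eq hu1
    obtain ⟨hsum, hle⟩ := hcoef t ht
    simp only [p, if_neg hz0, ne_eq, div_eq_iff (hf0 z hz hz0)]
    exact fun h => mul_deriv_sub_mul_ne_zero ha0 ha1 hrep hψu hsum hle hz hz0 (sub_eq_zero.2 h)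
  have hmaps : p '' 𝔻 ⊆ ψ '' 𝔻 := by
    refine subset_image_of_isPreconnected (isCompact_closedBall 0 1) ball_subset_closedBall hψc
      (hψi𝔻.isOpen_image_of_differentiableOn isOpen_ball hψd)
      ((convex_ball 0 1).isPreconnected.image p hpd.continuousOn)
      ⟨p 0, ⟨0, h0, rfl⟩, 0, h0, hp0.symm⟩ (disjoint_left.mpr ?_)
    rintro _ ⟨z, hz, rfl⟩ ⟨u, hu, hpu⟩
    exact hfront u (by rw [← closedBall_sdiff_ball]; exact hu) z hz hpu.symm
  exact ⟨hf, hf0, subordinate_of_mapsTo_s3 hψd hψi𝔻 hpd hp0 (mapsTo_iff_image_subset.mpr hmaps)⟩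
end
end

section
/- Let −1 ≤ E < D ≤ 1. If f(z) = z + Σ_{k≥2} a_k z^k ∈ 𝒜 satisfies Σ_{k=2}^∞ ((k − 1) + |kE − D|) |a_k| ≤ D − E, then f(z) ≠ 0 for z ∈ 𝔻\{0} and f ∈ S*((1 + Dz)/(1 + Ez)), i.e. f is Janowski starlike. -/
open Complex Metric Set

noncomputable section

/-! Write `A = z f' - f` and `B = D f - E z f'`, so that `z f' / f = (1 + D ω) / (1 + E ω)` with
`ω = A / B`. Expanding in power series, `A = ∑ (k - 1) a_k z^k` and
`B = (D - E) z + ∑_{k ≥ 2} (D - k E) a_k z^k`, and the coefficient condition gives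
`‖A z‖ ≤ ‖z‖² (D - E - T) < (D - E) ‖z‖ - ‖z‖² T ≤ ‖B z‖` for `0 < ‖z‖ < 1`, where
`T = ∑ |k E - D| ‖a_k‖`. Since `A` and `B` both vanish at `0` and `B' 0 = D - E ≠ 0`,
`ω` extends holomorphically to a self-map of the disk fixing `0`; and `f` does not vanish
because `(D - E) f = B + E A` with `|E| ≤ 1`. -/

open Topology

theorem hasSum_mul_deriv_of_hasSum {a : ℕ → ℂ} {f : ℂ → ℂ}
    (ha : Summable fun n : ℕ => (n : ℝ) * ‖a n‖)
    (hf : ∀ z ∈ 𝔻, HasSum (fun n => a n * z ^ n) (f z)) {z : ℂ} (hz : z ∈ 𝔻) :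
    HasSum (fun n : ℕ => (n : ℂ) * a n * z ^ n) (z * deriv f z) := by
  have hbound : ∀ n : ℕ, ∀ y ∈ 𝔻, ‖(n : ℂ) * a n * y ^ (n - 1)‖ ≤ n * ‖a n‖ := by
    intro n y hy
    rw [norm_mul, norm_mul, norm_pow, Complex.norm_natCast]
    exact mul_le_of_le_one_right (by positivity)
      (pow_le_one₀ (norm_nonneg _) (mem_ball_zero_iff.mp hy).le)
  have hterm : ∀ n : ℕ, ∀ y ∈ 𝔻,
      HasDerivAt (fun w => a n * w ^ n) ((n : ℂ) * a n * y ^ (n - 1)) y := fun n y _ =>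
    ((hasDerivAt_pow n y).const_mul (a n)).congr_deriv (by ring)
  have hderiv : HasDerivAt f (∑' n : ℕ, (n : ℂ) * a n * z ^ (n - 1)) z := by
    refine (hasDerivAt_tsum_of_isPreconnected ha isOpen_ball (convex_ball 0 1).isPreconnected
      hterm hbound hz (hf z hz).summable hz).congr_of_eventuallyEq ?_
    filter_upwards [isOpen_ball.mem_nhds hz] with w hw
    exact (hf w hw).tsum_eq.symm
  have hsum : HasSum (fun n : ℕ => (n : ℂ) * a n * z ^ (n - 1)) (deriv f z) :=
    hderiv.deriv ▸ (Summable.of_norm_bounded ha fun n => hbound n z hz).hasSum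
  have hshift : (fun n : ℕ => (n : ℂ) * a n * z ^ n) =
      fun n : ℕ => z * ((n : ℂ) * a n * z ^ (n - 1)) := by
    funext n
    cases n with
    | zero => simp
    | succ n => simp only [Nat.add_sub_cancel, pow_succ]; ring
  exact hshift ▸ hsum.mul_left z

theorem norm_sub_linear_le_of_hasSum {b : ℕ → ℂ} {z v : ℂ}
    (hb : Summable fun k => ‖b (k + 2)‖) (hz : ‖z‖ ≤ 1) (h : HasSum (fun k => b k * z ^ k) v) :
    ‖v - (b 0 + b 1 * z)‖ ≤ ‖z‖ ^ 2 * ∑' k, ‖b (k + 2)‖ := by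
  have htail : HasSum (fun k => b (k + 2) * z ^ (k + 2)) (v - (b 0 + b 1 * z)) := by
    simpa [Finset.sum_range_succ] using (hasSum_nat_add_iff' 2).mpr h
  refine htail.norm_le_of_bounded (hb.hasSum.mul_left _) fun k => ?_
  calc ‖b (k + 2) * z ^ (k + 2)‖ = ‖z‖ ^ 2 * ‖b (k + 2)‖ * ‖z‖ ^ k := by
        rw [norm_mul, norm_pow]; ring
    _ ≤ ‖z‖ ^ 2 * ‖b (k + 2)‖ :=
        mul_le_of_le_one_right (by positivity) (pow_le_one₀ (norm_nonneg _) hz)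

theorem exists_selfMap_eq_div_of_norm_lt {A B : ℂ → ℂ}
    (hA : DifferentiableOn ℂ A 𝔻) (hB : DifferentiableOn ℂ B 𝔻) (hA0 : A 0 = 0) (hB0 : B 0 = 0)
    (hA' : deriv A 0 = 0) (hB' : deriv B 0 ≠ 0) (hlt : ∀ z ∈ 𝔻, z ≠ 0 → ‖A z‖ < ‖B z‖) :
    ∃ ω : ℂ → ℂ, DifferentiableOn ℂ ω 𝔻 ∧ ω 0 = 0 ∧ (∀ z ∈ 𝔻, ω z ∈ 𝔻) ∧
      ∀ z ∈ 𝔻, z ≠ 0 → ω z = A z / B z := by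
  have h𝔻 : 𝔻 ∈ 𝓝 (0 : ℂ) := ball_mem_nhds 0 one_pos
  have hslope : ∀ {g : ℂ → ℂ}, g 0 = 0 → ∀ z ≠ 0, dslope g 0 z = g z / z := by
    intro g hg z hz
    rw [dslope_of_ne _ hz, slope_def_field, hg, sub_zero, sub_zero]
  have hω : ∀ z ≠ 0, dslope A 0 z / dslope B 0 z = A z / B z := by
    intro z hz
    rw [hslope hA0 z hz, hslope hB0 z hz, div_div_div_cancel_right₀ hz]
  have hBne : ∀ z ∈ 𝔻, dslope B 0 z ≠ 0 := by
    intro z hz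
    rcases eq_or_ne z 0 with rfl | hz0
    · rwa [dslope_same]
    · rw [hslope hB0 z hz0]
      exact div_ne_zero (norm_pos_iff.mp ((norm_nonneg _).trans_lt (hlt z hz hz0))) hz0
  refine ⟨fun z => dslope A 0 z / dslope B 0 z,
    ((differentiableOn_dslope h𝔻).2 hA).div ((differentiableOn_dslope h𝔻).2 hB) hBne,
    by simp [dslope_same, hA'], fun z hz => ?_, fun z _ hz => hω z hz⟩
  rcases eq_or_ne z 0 with rfl | hz0
  · simpa [dslope_same, hA'] using mem_of_mem_nhds h𝔻
  · have hlt := hlt z hz hz0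
    show dslope A 0 z / dslope B 0 z ∈ ball (0 : ℂ) 1
    rw [mem_ball_zero_iff, hω z hz0, norm_div, div_lt_one ((norm_nonneg _).trans_lt hlt)]
    exact hlt

theorem starlikeMM_janowski_of_norm_lt {D E : ℂ} {f : ℂ → ℂ} (hf : IsClassA f) (hDE : D ≠ E)
    (hE : ‖E‖ ≤ 1)
    (hlt : ∀ z ∈ 𝔻, z ≠ 0 → ‖z * deriv f z - f z‖ < ‖D * f z - E * (z * deriv f z)‖) :
    StarlikeMM (fun z => (1 + D * z) / (1 + E * z)) f := by
  obtain ⟨hfd, hf0, hf'0⟩ := hf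
  have h0 : (0 : ℂ) ∈ 𝔻 := mem_ball_self one_pos
  have hfa : AnalyticOnNhd ℂ f 𝔻 := hfd.analyticOnNhd isOpen_ball
  have hzf' : DifferentiableOn ℂ (fun z => z * deriv f z) 𝔻 :=
    differentiableOn_id.mul hfa.deriv.differentiableOn
  have hf_hasDeriv : HasDerivAt f 1 0 := hf'0 ▸ (hfa 0 h0).differentiableAt.hasDerivAt
  have hzf'_hasDeriv : HasDerivAt (fun z => z * deriv f z) 1 0 :=
    ((hasDerivAt_id' 0).mul (hfa.deriv 0 h0).differentiableAt.hasDerivAt).congr_deriv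
      (by simp [hf'0])
  have hB_hasDeriv : HasDerivAt (fun z => D * f z - E * (z * deriv f z)) (D - E) 0 :=
    ((hf_hasDeriv.const_mul D).sub (hzf'_hasDeriv.const_mul E)).congr_deriv (by ring)
  obtain ⟨ω, hωd, hω0, hω𝔻, hωeq⟩ := exists_selfMap_eq_div_of_norm_lt
    (A := fun z => z * deriv f z - f z) (B := fun z => D * f z - E * (z * deriv f z))
    (hzf'.sub hfd) ((hfd.const_mul D).sub (hzf'.const_mul E)) (by simp [hf0]) (by simp [hf0])
    ((hzf'_hasDeriv.sub hf_hasDeriv).deriv.trans (sub_self 1))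
    (hB_hasDeriv.deriv ▸ sub_ne_zero.mpr hDE)
    hlt
  have hfne : ∀ z ∈ 𝔻, z ≠ 0 → f z ≠ 0 := by
    intro z hz hz0 hfz
    have hBA : D * f z - E * (z * deriv f z) = -(E * (z * deriv f z - f z)) := by
      rw [hfz]; ring
    have := hlt z hz hz0
    rw [hBA, norm_neg, norm_mul] at this
    nlinarith [norm_nonneg (z * deriv f z - f z)]
  refine ⟨⟨hfd, hf0, hf'0⟩, hfne, ω, hωd, hω0, hω𝔻, fun z hz => ?_⟩
  rcases eq_or_ne z 0 with rfl | hz0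
  · simp [hω0]
  · have hB : D * f z - E * (z * deriv f z) ≠ 0 :=
      norm_pos_iff.mp ((norm_nonneg _).trans_lt (hlt z hz hz0))
    have hDE' : D - E ≠ 0 := sub_ne_zero.mpr hDE
    dsimp only
    rw [if_neg hz0, hωeq z hz hz0]
    have hnum : 1 + D * ((z * deriv f z - f z) / (D * f z - E * (z * deriv f z))) =
        (D - E) * (z * deriv f z) / (D * f z - E * (z * deriv f z)) := by
      rw [mul_div_assoc', one_add_div hB]; ring
    have hden : 1 + E * ((z * deriv f z - f z) / (D * f z - E * (z * deriv f z))) =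
        (D - E) * f z / (D * f z - E * (z * deriv f z)) := by
      rw [mul_div_assoc', one_add_div hB]; ring
    rw [hnum, hden, div_div_div_cancel_right₀ hB, mul_div_mul_left _ _ hDE']

theorem norm_sub_lt_norm_of_coeff_bound {D E : ℝ} (hED : E < D) {f : ℂ → ℂ} {a : ℕ → ℂ}
    (ha0 : a 0 = 0) (ha1 : a 1 = 1) (hrep : ∀ z ∈ 𝔻, HasSum (fun k => a k * z ^ k) (f z))
    (hsum : Summable fun k : ℕ =>
      ((((k + 2 : ℕ) : ℝ) - 1) + |((k + 2 : ℕ) : ℝ) * E - D|) * ‖a (k + 2)‖)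
    (hcoef : ∑' k : ℕ,
      ((((k + 2 : ℕ) : ℝ) - 1) + |((k + 2 : ℕ) : ℝ) * E - D|) * ‖a (k + 2)‖ ≤ D - E) :
    ∀ z ∈ 𝔻, z ≠ 0 → ‖z * deriv f z - f z‖ < ‖(D : ℂ) * f z - E * (z * deriv f z)‖ := by
  set bA : ℕ → ℂ := fun k => ((k : ℂ) - 1) * a k
  set bB : ℕ → ℂ := fun k => ((D : ℂ) - k * E) * a k
  have hterm : ∀ k : ℕ, ‖bA (k + 2)‖ + ‖bB (k + 2)‖ =
      ((((k + 2 : ℕ) : ℝ) - 1) + |((k + 2 : ℕ) : ℝ) * E - D|) * ‖a (k + 2)‖ := by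
    intro k
    have hnA : ‖(((k + 2 : ℕ) : ℂ) - 1)‖ = ((k + 2 : ℕ) : ℝ) - 1 := by
      rw [show (((k + 2 : ℕ) : ℂ) - 1) = ((k + 1 : ℕ) : ℂ) by push_cast; ring, norm_natCast]
      push_cast; ring
    have hnB : ‖(D : ℂ) - ((k + 2 : ℕ) : ℂ) * E‖ = |((k + 2 : ℕ) : ℝ) * E - D| := by
      rw [show (D : ℂ) - ((k + 2 : ℕ) : ℂ) * E = ((D - ((k + 2 : ℕ) : ℝ) * E : ℝ) : ℂ) by
        push_cast; ring, norm_real, Real.norm_eq_abs, abs_sub_comm]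
    simp only [bA, bB, norm_mul, hnA, hnB]
    ring
  have hsA : Summable fun k => ‖bA (k + 2)‖ := hsum.of_nonneg_of_le (fun _ => norm_nonneg _)
    fun k => hterm k ▸ le_add_of_nonneg_right (norm_nonneg _)
  have hsB : Summable fun k => ‖bB (k + 2)‖ := hsum.of_nonneg_of_le (fun _ => norm_nonneg _)
    fun k => hterm k ▸ le_add_of_nonneg_left (norm_nonneg _)
  have hT : ∑' k, ‖bA (k + 2)‖ + ∑' k, ‖bB (k + 2)‖ ≤ D - E := by
    rw [← hsA.tsum_add hsB]
    simpa only [hterm] using hcoef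
  have hn : Summable fun n : ℕ => (n : ℝ) * ‖a n‖ := by
    rw [← summable_nat_add_iff 2]
    refine (hsum.mul_left 2).of_nonneg_of_le (fun k => by positivity) fun k => ?_
    have := abs_nonneg (((k + 2 : ℕ) : ℝ) * E - D)
    push_cast at this ⊢
    nlinarith [norm_nonneg (a (k + 2))]
  intro z hz hz0
  have hr : 0 < ‖z‖ := norm_pos_iff.mpr hz0
  have hr1 : ‖z‖ < 1 := mem_ball_zero_iff.mp hz
  have hzf := hasSum_mul_deriv_of_hasSum hn hrep hz
  have hA : ‖z * deriv f z - f z‖ ≤ ‖z‖ ^ 2 * ∑' k, ‖bA (k + 2)‖ := by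
    have h := norm_sub_linear_le_of_hasSum hsA hr1.le
      ((hzf.sub (hrep z hz)).congr_fun fun k => by simp only [bA]; ring)
    simpa [bA, ha0, ha1] using h
  have hB : ‖(D : ℂ) * f z - E * (z * deriv f z) - (D - E) * z‖ ≤
      ‖z‖ ^ 2 * ∑' k, ‖bB (k + 2)‖ := by
    have h := norm_sub_linear_le_of_hasSum hsB hr1.le
      ((((hrep z hz).mul_left (D : ℂ)).sub (hzf.mul_left (E : ℂ))).congr_fun
        fun k => by simp only [bB]; ring)
    simpa [bB, ha0, ha1] using h
  have hDEz : ‖((D : ℂ) - E) * z‖ = (D - E) * ‖z‖ := by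
    rw [norm_mul, ← ofReal_sub, norm_real, Real.norm_of_nonneg (sub_pos.mpr hED).le]
  calc ‖z * deriv f z - f z‖ ≤ ‖z‖ ^ 2 * ∑' k, ‖bA (k + 2)‖ := hA
    _ ≤ ‖z‖ ^ 2 * (D - E - ∑' k, ‖bB (k + 2)‖) := by gcongr; linarith
    _ < (D - E) * ‖z‖ - ‖z‖ ^ 2 * ∑' k, ‖bB (k + 2)‖ := by
      nlinarith [mul_pos (mul_pos hr (sub_pos.mpr hr1)) (sub_pos.mpr hED)]
    _ ≤ ‖(D : ℂ) * f z - E * (z * deriv f z)‖ := by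
      have := norm_sub_norm_le (((D : ℂ) - E) * z) ((D : ℂ) * f z - E * (z * deriv f z))
      rw [norm_sub_rev (((D : ℂ) - E) * z), hDEz] at this
      linarith

theorem stmt4 (D E : ℝ) (hE : -1 ≤ E) (hED : E < D) (hD : D ≤ 1)
    (f : ℂ → ℂ) (a : ℕ → ℂ)
    (hf : IsClassA f) (ha0 : a 0 = 0) (ha1 : a 1 = 1)
    (hrep : ∀ z ∈ 𝔻, HasSum (fun k => a k * z ^ k) (f z))
    (hsum : Summable (fun k : ℕ =>
      ((((k+2:ℕ):ℝ) - 1) + |((k+2:ℕ):ℝ)*E - D|) * ‖a (k+2)‖))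
    (hcoef : ∑' k : ℕ,
      ((((k+2:ℕ):ℝ) - 1) + |((k+2:ℕ):ℝ)*E - D|) * ‖a (k+2)‖ ≤ D - E) :
    StarlikeMM (fun z => (1 + (D:ℂ)*z) / (1 + (E:ℂ)*z)) f := by
  have hE1 : ‖(E : ℂ)‖ ≤ 1 := by
    rw [norm_real, Real.norm_eq_abs, abs_le]
    exact ⟨hE, by linarith⟩
  exact starlikeMM_janowski_of_norm_lt hf (ofReal_injective.ne hED.ne') hE1
    (norm_sub_lt_norm_of_coeff_bound hED ha0 ha1 hrep hsum hcoef)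
end
end

section
/- Let ψ be a Ma-Minda function that extends to a continuous injective map on the closed unit disk. Let f ∈ 𝒜 with f'(z) ≠ 0 for z ∈ 𝔻. Then f ∈ C(ψ) if and only if for every z ∈ 𝔻 and every t ∈ [0, 2π), (1 − ψ(e^{it})) f'(z) + z f''(z) ≠ 0. -/
/-!
Put `p z = 1 + z f''(z) / f'(z)`. If `p = ψ ∘ ω` with `ω` mapping `𝔻` into `𝔻`, then `p` never takes
a value `ψ (e^{it})`, because `ψ` is injective on the closed disk. Conversely, if `p` omits
`ψ(∂𝔻)`, then the connected set `p(𝔻)` meets the open set `ψ(𝔻)` (at `p 0 = ψ 0`) and avoids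
`ψ(closedBall 0 1) \ ψ(𝔻) ⊆ ψ(∂𝔻)`, where `ψ(closedBall 0 1)` is compact; hence `p(𝔻) ⊆ ψ(𝔻)`
and `ω = ψ⁻¹ ∘ p` is the subordinating function. The inverse of the injective holomorphic `ψ` is
continuous by the open mapping theorem, holomorphic off the images of the isolated critical points
of `ψ` by the inverse function theorem, and hence holomorphic everywhere by Riemann's removable
singularity theorem.
-/

open Complex Metric Set

noncomputable section

open Topology Filter

theorem Set.InjOn.not_eventually_eq {X Y : Type*} [TopologicalSpace X] {f : X → Y} {s : Set X}
    {x : X} [(𝓝[≠] x).NeBot] (hf : InjOn f s) (hs : s ∈ 𝓝 x) : ¬∀ᶠ y in 𝓝 x, f y = f x := by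
  intro h
  obtain ⟨y, ⟨hy, hys⟩, hne⟩ :=
    (((h.and hs).filter_mono (nhdsWithin_le_nhds (s := {x}ᶜ))).and self_mem_nhdsWithin).exists
  exact hne (hf hys (mem_of_mem_nhds hs) hy)

theorem eventually_eq_of_deriv_eventuallyEq_zero {𝕜 G : Type*} [RCLike 𝕜] [NormedAddCommGroup G]
    [NormedSpace 𝕜 G] {f : 𝕜 → G} {x : 𝕜} (hf : ∀ᶠ y in 𝓝 x, DifferentiableAt 𝕜 f y)
    (hf' : deriv f =ᶠ[𝓝 x] 0) : ∀ᶠ y in 𝓝 x, f y = f x := by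
  obtain ⟨r, hr, hball⟩ := Metric.eventually_nhds_iff_ball.1 (hf.and hf')
  filter_upwards [Metric.ball_mem_nhds x hr] with y hy
  exact Metric.isOpen_ball.is_const_of_deriv_eq_zero (convex_ball x r).isPreconnected
    (fun z hz => (hball z hz).1.differentiableWithinAt) (fun z hz => (hball z hz).2) hy
    (mem_ball_self hr)

namespace Set.InjOn

variable {ψ : ℂ → ℂ} {U : Set ℂ}

theorem isOpen_image (hinj : InjOn ψ U) (hψ : DifferentiableOn ℂ ψ U) (hU : IsOpen U)
    {s : Set ℂ} (hsU : s ⊆ U) (hs : IsOpen s) : IsOpen (ψ '' s) := by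
  refine isOpen_iff_mem_nhds.2 ?_
  rintro _ ⟨z, hz, rfl⟩
  have hzU := hU.mem_nhds (hsU hz)
  exact (hψ.analyticAt hzU).eventually_constant_or_nhds_le_map_nhds.resolve_left
    (hinj.not_eventually_eq hzU) (image_mem_map (hs.mem_nhds hz))

theorem eventually_deriv_ne_zero (hinj : InjOn ψ U) (hψ : DifferentiableOn ℂ ψ U)
    (hU : IsOpen U) {w : ℂ} (hw : w ∈ U) : ∀ᶠ v in 𝓝[≠] w, deriv ψ v ≠ 0 := by
  have hwU := hU.mem_nhds hw
  refine (hψ.analyticAt hwU).deriv.eventually_eq_zero_or_eventually_ne_zero.resolve_left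
    fun hzero => hinj.not_eventually_eq hwU ?_
  refine eventually_eq_of_deriv_eventuallyEq_zero ?_ hzero
  filter_upwards [hU.eventually_mem hw] with v hv using hψ.differentiableAt (hU.mem_nhds hv)

end Set.InjOn

theorem OpenPartialHomeomorph.differentiableOn_symm (e : OpenPartialHomeomorph ℂ ℂ)
    (he : DifferentiableOn ℂ e e.source) : DifferentiableOn ℂ e.symm e.target := by
  intro y hy
  have hsymm : Tendsto e.symm (𝓝[≠] y) (𝓝[≠] (e.symm y)) := by
    refine tendsto_nhdsWithin_of_tendsto_nhds_of_eventually_within _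
      ((e.continuousAt_symm hy).tendsto.mono_left nhdsWithin_le_nhds) ?_
    filter_upwards [nhdsWithin_le_nhds (e.open_target.mem_nhds hy), self_mem_nhdsWithin]
      with y' hy' hne using fun h => hne (e.symm.injOn hy' hy h)
  have hdiff : ∀ᶠ y' in 𝓝[≠] y, DifferentiableAt ℂ e.symm y' := by
    filter_upwards [hsymm.eventually (e.injOn.eventually_deriv_ne_zero he e.open_source
      (e.map_target hy)), nhdsWithin_le_nhds (e.open_target.mem_nhds hy)] with y' hd hy'
    have hx := e.open_source.mem_nhds (e.map_target hy')
    exact (e.hasDerivAt_symm hy' hd (he.differentiableAt hx).hasDerivAt).differentiableAt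
  exact (Complex.analyticAt_of_differentiable_on_punctured_nhds_of_continuousAt hdiff
    (e.continuousAt_symm hy)).differentiableAt.differentiableWithinAt

theorem Set.InjOn.differentiableOn_invFunOn_s5 {ψ : ℂ → ℂ} {U : Set ℂ} (hinj : InjOn ψ U)
    (hψ : DifferentiableOn ℂ ψ U) (hU : IsOpen U) :
    DifferentiableOn ℂ (Function.invFunOn ψ U) (ψ '' U) := by
  have hopen : IsOpenMap (U.domRestrict ψ) := fun V hV => by
    rw [domRestrict_eq, image_comp]
    exact hinj.isOpen_image hψ hU (Subtype.coe_image_subset U V) (hU.isOpenMap_subtype_val V hV)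
  exact (OpenPartialHomeomorph.ofContinuousOpenRestrict (hinj.toPartialEquiv ψ U)
    hψ.continuousOn hopen hU).differentiableOn_symm hψ

theorem IsPreconnected.mapsTo_of_forall_notMem_diff {X Y : Type*} [TopologicalSpace X]
    [TopologicalSpace Y] {s : Set X} {h : X → Y} {U K : Set Y} (hs : IsPreconnected s)
    (hh : ContinuousOn h s) (hU : IsOpen U) (hK : IsClosed K) (hUK : U ⊆ K)
    (havoid : ∀ x ∈ s, h x ∉ K \ U) {x₀ : X} (hx₀ : x₀ ∈ s) (hx₀U : h x₀ ∈ U) :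
    MapsTo h s U := by
  have hsub : h '' s ⊆ U ∪ Kᶜ := by
    rintro _ ⟨x, hx, rfl⟩
    by_cases hxK : h x ∈ K
    · exact Or.inl (not_not.1 fun hxU => havoid x hx ⟨hxK, hxU⟩)
    · exact Or.inr hxK
  exact fun x hx => (hs.image h hh).subset_left_of_subset_union hU hK.isOpen_compl
    (disjoint_compl_right.mono_left hUK) hsub ⟨h x₀, mem_image_of_mem h hx₀, hx₀U⟩
    (mem_image_of_mem h hx)

theorem image_exp_I_mul_Ico_eq_sphere :
    (fun t : ℝ => exp (I * t)) '' Ico 0 (2 * Real.pi) = sphere 0 1 := by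
  simp_rw [mul_comm I, ← range_exp_mul_I]
  have hper : Function.Periodic (fun t : ℝ => exp (t * I)) (2 * Real.pi) := fun t => by
    simpa using exp_mul_I_periodic t
  refine (image_subset_range _ _).antisymm (range_subset_iff.2 fun t => ?_)
  obtain ⟨s, hs, hts⟩ := hper.exists_mem_Ico₀ Real.two_pi_pos t
  exact ⟨s, hs, hts.symm⟩

theorem one_add_mul_div_eq_iff {K : Type*} [Field K] {a b c z : K} (ha : a ≠ 0) :
    1 + z * b / a = c ↔ (1 - c) * a + z * b = 0 := by
  rw [← sub_eq_zero, ← mul_left_inj' ha, zero_mul]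
  congr! 1
  field_simp
  ring

theorem Subordinate.ne_image_sphere {h ψ : ℂ → ℂ} (hsub : Subordinate h ψ)
    (hψi : InjOn ψ (closedBall 0 1)) {z : ℂ} (hz : z ∈ 𝔻) {w : ℂ} (hw : w ∈ sphere (0 : ℂ) 1) :
    h z ≠ ψ w := by
  obtain ⟨ω, -, -, hω𝔻, hωh⟩ := hsub
  intro heq
  have hωw : ω z = w := hψi (ball_subset_closedBall (hω𝔻 z hz)) (sphere_subset_closedBall hw)
    ((hωh z hz).symm.trans heq)
  have hωz : ω z ∈ ball (0 : ℂ) 1 := hω𝔻 z hz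
  rw [hωw, mem_ball, ← mem_sphere.1 hw] at hωz
  exact lt_irrefl _ hωz

theorem subordinate_of_forall_ne_image_sphere {h ψ : ℂ → ℂ} (hψ : DifferentiableOn ℂ ψ 𝔻)
    (hψc : ContinuousOn ψ (closedBall 0 1)) (hψi : InjOn ψ (closedBall 0 1))
    (hh : DifferentiableOn ℂ h 𝔻) (h0 : h 0 = ψ 0)
    (havoid : ∀ z ∈ 𝔻, ∀ w ∈ sphere (0 : ℂ) 1, h z ≠ ψ w) : Subordinate h ψ := by
  have hinj : InjOn ψ 𝔻 := hψi.mono ball_subset_closedBall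
  have h0𝔻 : (0 : ℂ) ∈ 𝔻 := mem_ball_self one_pos
  have hmaps : MapsTo h 𝔻 (ψ '' 𝔻) := by
    refine (convex_ball (0 : ℂ) 1).isPreconnected.mapsTo_of_forall_notMem_diff hh.continuousOn
      (hinj.isOpen_image hψ isOpen_ball subset_rfl isOpen_ball)
      ((isCompact_closedBall 0 1).image_of_continuousOn hψc).isClosed
      (image_mono ball_subset_closedBall) ?_ h0𝔻 ⟨0, h0𝔻, h0.symm⟩
    rintro z hz ⟨⟨w, hw, hwz⟩, hnot⟩
    refine havoid z hz w ?_ hwz.symm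
    rw [← closedBall_sdiff_ball]
    exact ⟨hw, fun hw𝔻 => hnot ⟨w, hw𝔻, hwz⟩⟩
  refine ⟨Function.invFunOn ψ 𝔻 ∘ h, (hinj.differentiableOn_invFunOn_s5 hψ isOpen_ball).comp hh hmaps,
    ?_, fun z hz => Function.invFunOn_mem (hmaps hz),
    fun z hz => (Function.invFunOn_eq (hmaps hz)).symm⟩
  rw [Function.comp_apply, h0]
  exact hinj.leftInvOn_invFunOn h0𝔻

theorem subordinate_iff_forall_ne_image_sphere {h ψ : ℂ → ℂ} (hψ : DifferentiableOn ℂ ψ 𝔻)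
    (hψc : ContinuousOn ψ (closedBall 0 1)) (hψi : InjOn ψ (closedBall 0 1))
    (hh : DifferentiableOn ℂ h 𝔻) (h0 : h 0 = ψ 0) :
    Subordinate h ψ ↔ ∀ z ∈ 𝔻, ∀ w ∈ sphere (0 : ℂ) 1, h z ≠ ψ w :=
  ⟨fun hsub _ hz _ hw => hsub.ne_image_sphere hψi hz hw,
    subordinate_of_forall_ne_image_sphere hψ hψc hψi hh h0⟩

theorem stmt5 (ψ f : ℂ → ℂ) (hψ : MaMinda ψ)
    (hψc : ContinuousOn ψ (Metric.closedBall 0 1))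
    (hψi : Set.InjOn ψ (Metric.closedBall 0 1))
    (hf : IsClassA f) (hf' : ∀ z ∈ 𝔻, deriv f z ≠ 0) :
    ConvexMM ψ f ↔
      ∀ z ∈ 𝔻, ∀ t ∈ Set.Ico (0:ℝ) (2*Real.pi),
        (1 - ψ (Complex.exp (Complex.I * t))) * deriv f z + z * deriv (deriv f) z ≠ 0 := by
  have hf₁ : DifferentiableOn ℂ (deriv f) 𝔻 := hf.1.deriv isOpen_ball
  have hh : DifferentiableOn ℂ (fun z => 1 + z * deriv (deriv f) z / deriv f z) 𝔻 :=
    (differentiableOn_const 1).add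
      ((differentiableOn_id.mul (hf₁.deriv isOpen_ball)).div hf₁ hf')
  rw [ConvexMM, and_iff_right hf, and_iff_right hf',
    subordinate_iff_forall_ne_image_sphere hψ.1 hψc hψi hh (by simp [hψ.2.2.2.1])]
  refine forall₂_congr fun z hz => ?_
  rw [← image_exp_I_mul_Ico_eq_sphere, forall_mem_image]
  exact forall₂_congr fun t _ => not_congr (one_add_mul_div_eq_iff (hf' z hz))
end
end

section
/- Let F(z) = z(1+z)/(1−z)³ on 𝔻. For every z ∈ 𝔻 with |z| = r (0 < r < 1), Re(zF'(z)/F(z)) ≥ (1 − 4r + r²)/(1 − r²). -/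
open Complex Metric Set

noncomputable section

/-! `zF'/F = 3/(1 - z) - 1/(1 + z) - 1`, and for `|z| = r` the Möbius images `1/(1 ∓ z)` of the
circle are circles symmetric about ℝ, so `Re (1/(1 - z)) ≥ 1/(1 + r)` and `Re (1/(1 + z)) ≤ 1/(1 - r)`.
Hence `Re (zF'/F) ≥ 3/(1 + r) - 1/(1 - r) - 1 = (1 - 4r + r²)/(1 - r²)`. -/

namespace Complex

lemma normSq_one_sub (z : ℂ) : normSq (1 - z) = 1 - 2 * z.re + ‖z‖ ^ 2 := by
  rw [Complex.sq_norm, normSq_apply, normSq_apply]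
  simp only [sub_re, one_re, sub_im, one_im]
  ring

lemma normSq_one_add (z : ℂ) : normSq (1 + z) = 1 + 2 * z.re + ‖z‖ ^ 2 := by
  simpa [sub_eq_add_neg] using normSq_one_sub (-z)

lemma inv_one_add_norm_le_re_inv_one_sub {z : ℂ} (hz : ‖z‖ < 1) :
    (1 + ‖z‖)⁻¹ ≤ ((1 - z)⁻¹).re := by
  obtain ⟨hre, hre'⟩ := abs_le.mp (abs_re_le_norm z)
  have hpos : 0 < normSq (1 - z) := by rw [normSq_one_sub]; nlinarith
  rw [inv_re, sub_re, one_re, ← one_div, div_le_div_iff₀ (by positivity) hpos, normSq_one_sub]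
  nlinarith [mul_nonneg (neg_le_iff_add_nonneg.mp hre) (sub_nonneg.mpr hz.le)]

lemma re_inv_one_add_le_inv_one_sub_norm {z : ℂ} (hz : ‖z‖ < 1) :
    ((1 + z)⁻¹).re ≤ (1 - ‖z‖)⁻¹ := by
  obtain ⟨hre, hre'⟩ := abs_le.mp (abs_re_le_norm z)
  have hpos : 0 < normSq (1 + z) := by rw [normSq_one_add]; nlinarith
  rw [inv_re, add_re, one_re, ← one_div, div_le_div_iff₀ hpos (by linarith), normSq_one_add]
  nlinarith [mul_nonneg (neg_le_iff_add_nonneg.mp hre) (add_nonneg zero_le_one (norm_nonneg z))]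

end Complex

lemma deriv_mul_one_add_div_one_sub_pow_three {z : ℂ} (hz : z ≠ 1) :
    deriv (fun w : ℂ => w * (1 + w) / (1 - w) ^ 3) z = (1 + 4 * z + z ^ 2) / (1 - z) ^ 4 := by
  have hsub : (1 : ℂ) - z ≠ 0 := sub_ne_zero.mpr hz.symm
  have hnum : HasDerivAt (fun w : ℂ => w * (1 + w)) (1 * (1 + z) + z * 1) z :=
    (hasDerivAt_id z).fun_mul ((hasDerivAt_id z).const_add 1)
  have hden : HasDerivAt (fun w : ℂ => (1 - w) ^ 3) (3 * (1 - z) ^ 2 * -1) z := by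
    simpa using ((hasDerivAt_id z).const_sub 1).fun_pow 3
  rw [(hnum.fun_div hden (pow_ne_zero 3 hsub)).deriv]
  field_simp
  ring

lemma mul_deriv_div_self_mul_one_add_div_one_sub_pow_three {z : ℂ} (h0 : z ≠ 0) (h1 : z ≠ 1)
    (hm1 : z ≠ -1) :
    z * deriv (fun w : ℂ => w * (1 + w) / (1 - w) ^ 3) z / (z * (1 + z) / (1 - z) ^ 3) =
      3 * (1 - z)⁻¹ - (1 + z)⁻¹ - 1 := by
  have hsub : (1 : ℂ) - z ≠ 0 := sub_ne_zero.mpr h1.symm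
  have hadd : (1 : ℂ) + z ≠ 0 := by
    rw [add_comm, ← sub_neg_eq_add]; exact sub_ne_zero.mpr hm1
  rw [deriv_mul_one_add_div_one_sub_pow_three h1]
  field_simp
  ring

theorem stmt9 :
    ∀ z : ℂ, z ≠ 0 → ‖z‖ < 1 →
      (1 - 4*‖z‖ + ‖z‖^2) / (1 - ‖z‖^2) ≤
        (z * deriv (fun w => w * (1 + w) / (1 - w)^3) z /
          (z * (1 + z) / (1 - z)^3)).re := by
  intro z hz0 hz1
  have h1 : z ≠ 1 := by rintro rfl; simp at hz1
  have hm1 : z ≠ -1 := by rintro rfl; simp at hz1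
  have hr : 0 < 1 - ‖z‖ := sub_pos.mpr hz1
  rw [mul_deriv_div_self_mul_one_add_div_one_sub_pow_three hz0 h1 hm1]
  simp only [sub_re, mul_re, one_re, re_ofNat, im_ofNat, zero_mul, sub_zero]
  calc (1 - 4*‖z‖ + ‖z‖^2) / (1 - ‖z‖^2) = 3 * (1 + ‖z‖)⁻¹ - (1 - ‖z‖)⁻¹ - 1 := by
        have hr' : 0 < 1 + ‖z‖ := by positivity
        rw [show 1 - ‖z‖ ^ 2 = (1 - ‖z‖) * (1 + ‖z‖) by ring]
        field_simp
        ring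
    _ ≤ 3 * ((1 - z)⁻¹).re - ((1 + z)⁻¹).re - 1 := by
        gcongr
        · exact inv_one_add_norm_le_re_inv_one_sub hz1
        · exact re_inv_one_add_le_inv_one_sub_norm hz1
end
end

section
/- Let 0 < q < 1 and H(z) = z/((1 − qz)(1 − z)) on 𝔻. For every z ∈ 𝔻 with |z| = r (0 < r < 1), Re(zH'(z)/H(z)) ≥ (1 − qr²)/((1 + r)(1 + qr)). -/
open Complex Metric Set

noncomputable section

/-!
The logarithmic derivative splits as `zH'/H = 1 + z/(1 - z) + qz/(1 - qz)`, and each Möbius term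
`w/(1 - w)` has real part at least `-|w|/(1 + |w|)`, with equality at `w = -|w|`.
Adding the bounds for `w = z` and `w = qz` gives exactly `(1 - qr²)/((1 + r)(1 + qr))`.
-/

lemma one_sub_ne_zero_of_norm_lt_one {w : ℂ} (hw : ‖w‖ < 1) : 1 - w ≠ 0 :=
  sub_ne_zero.mpr fun h => by simp [← h] at hw

lemma neg_norm_div_one_add_norm_le_re_div_one_sub {w : ℂ} (hw : ‖w‖ < 1) :
    -‖w‖ / (1 + ‖w‖) ≤ (w / (1 - w)).re := by
  have hre_ge : -‖w‖ ≤ w.re := (abs_le.mp (abs_re_le_norm w)).1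
  have hnormSq : normSq w = ‖w‖ ^ 2 := (Complex.sq_norm w).symm
  have hden : 0 < normSq (1 - w) := normSq_pos.mpr (one_sub_ne_zero_of_norm_lt_one hw)
  have hre : (w / (1 - w)).re = (w.re - ‖w‖ ^ 2) / normSq (1 - w) := by
    rw [div_re, ← add_div]
    congr 1
    rw [← hnormSq, normSq_apply]
    simp only [sub_re, one_re, sub_im, one_im]
    ring
  have hnormSq_sub : normSq (1 - w) = 1 - 2 * w.re + ‖w‖ ^ 2 := by
    rw [← hnormSq, normSq_apply, normSq_apply]
    simp only [sub_re, one_re, sub_im, one_im]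
    ring
  rw [hre, div_le_div_iff₀ (by positivity) hden, hnormSq_sub]
  -- the difference of the two sides is `(1 - ‖w‖) (‖w‖ + Re w) ≥ 0`
  nlinarith [norm_nonneg w, mul_nonneg (sub_nonneg.mpr hw.le) (neg_le_iff_add_nonneg.mp hre_ge)]

lemma mul_deriv_div_self_div_one_sub_mul_one_sub {c z : ℂ} (hz : z ≠ 0)
    (hcz : 1 - c * z ≠ 0) (hz1 : 1 - z ≠ 0) :
    z * deriv (fun w => w / ((1 - c * w) * (1 - w))) z / (z / ((1 - c * z) * (1 - z))) =
      1 + z / (1 - z) + c * z / (1 - c * z) := by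
  have hlin : HasDerivAt (fun w : ℂ => 1 - c * w) (-c) z := by
    simpa using ((hasDerivAt_id z).const_mul c).const_sub 1
  have hden : HasDerivAt (fun w : ℂ => (1 - c * w) * (1 - w)) (-c * (1 - z) + (1 - c * z) * -1) z :=
    hlin.mul (by simpa using (hasDerivAt_id z).const_sub 1)
  have hquot : HasDerivAt (fun w => w / ((1 - c * w) * (1 - w)))
      ((1 * ((1 - c * z) * (1 - z)) - z * (-c * (1 - z) + (1 - c * z) * -1)) /
        ((1 - c * z) * (1 - z)) ^ 2) z :=
    (hasDerivAt_id z).div hden (mul_ne_zero hcz hz1)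
  have hzc : 1 - z * c ≠ 0 := by rwa [mul_comm]
  rw [hquot.deriv]
  field_simp
  ring

theorem stmt15 (q : ℝ) (hq0 : 0 < q) (hq1 : q < 1) :
    ∀ z : ℂ, z ≠ 0 → ‖z‖ < 1 →
      (1 - q*‖z‖^2) / ((1 + ‖z‖) * (1 + q*‖z‖)) ≤
        (z * deriv (fun w => w / ((1 - (q:ℂ)*w) * (1 - w))) z /
          (z / ((1 - (q:ℂ)*z) * (1 - z)))).re := by
  intro z hz0 hz1
  have hnorm_qz : ‖(q : ℂ) * z‖ = q * ‖z‖ := by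
    rw [norm_mul, norm_real, Real.norm_of_nonneg hq0.le]
  have hqz1 : ‖(q : ℂ) * z‖ < 1 := by
    rw [hnorm_qz]
    nlinarith [norm_nonneg z]
  rw [mul_deriv_div_self_div_one_sub_mul_one_sub hz0 (one_sub_ne_zero_of_norm_lt_one hqz1)
    (one_sub_ne_zero_of_norm_lt_one hz1)]
  have hbound_z := neg_norm_div_one_add_norm_le_re_div_one_sub hz1
  have hbound_qz := neg_norm_div_one_add_norm_le_re_div_one_sub hqz1
  rw [hnorm_qz] at hbound_qz
  have hsplit : (1 - q * ‖z‖ ^ 2) / ((1 + ‖z‖) * (1 + q * ‖z‖)) =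
      1 + -‖z‖ / (1 + ‖z‖) + -(q * ‖z‖) / (1 + q * ‖z‖) := by
    field_simp
    ring
  simp only [hsplit, add_re, one_re]
  linarith
end
end
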